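/- arXiv:2410.05702 — 8 statements merged into one kernel-verified Lean document; each statement's English description precedes it below -/
import Mathlib

section
/- Let Φ̂ ∈ Π_{p,T}. Then Σ ⊆ Σ̄, i.e., every pair (A,B) ∈ ℝ^{n×n} × ℝ^{n×m} that is consistent with the data under data perturbation satisfies the quadratic matrix inequality [I_n, A, B] N [I_n, A, B]ᵀ ⪰ 0 with N = [E, 𝐗] Φ̂ [E, 𝐗]ᵀ. -/
open Matrix

/-- The four Moore–Penrose equations characterizing the pseudoinverse. -/
def IsMoorePenroseInv {m n : Type*} [Fintype m] [Fintype n]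
    (A : Matrix m n ℝ) (Ad : Matrix n m ℝ) : Prop :=
  A * Ad * A = A ∧ Ad * A * Ad = Ad ∧ (A * Ad)ᵀ = A * Ad ∧ (Ad * A)ᵀ = Ad * A

/-- The stacked data matrix `𝐗 = [X₊ᵀ, −X₋ᵀ, −U₋ᵀ]ᵀ`. -/
def dataX {n m T : ℕ} (Xp Xm : Matrix (Fin n) (Fin T) ℝ) (Um : Matrix (Fin m) (Fin T) ℝ) :
    Matrix (Fin n ⊕ (Fin n ⊕ Fin m)) (Fin T) ℝ :=
  fromRows Xp (fromRows (-Xm) (-Um))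

/-- The row block `S = [I_n, A, B]`. -/
def rowS {n m : ℕ} (A : Matrix (Fin n) (Fin n) ℝ) (B : Matrix (Fin n) (Fin m) ℝ) :
    Matrix (Fin n) (Fin n ⊕ (Fin n ⊕ Fin m)) ℝ :=
  fromCols 1 (fromCols A B)

/-- `(A,B)` is consistent with the data under data perturbation: there exists `Δ̂`
with `S𝐗 = S E Δ̂` satisfying the QMI for `Φ̂`. -/
def ConsistentDP {n m p T : ℕ} (Xp Xm : Matrix (Fin n) (Fin T) ℝ) (Um : Matrix (Fin m) (Fin T) ℝ)
    (E : Matrix (Fin n ⊕ (Fin n ⊕ Fin m)) (Fin p) ℝ)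
    (Φ : Matrix (Fin p ⊕ Fin T) (Fin p ⊕ Fin T) ℝ)
    (A : Matrix (Fin n) (Fin n) ℝ) (B : Matrix (Fin n) (Fin m) ℝ) : Prop :=
  ∃ Δ : Matrix (Fin p) (Fin T) ℝ,
    rowS A B * dataX Xp Xm Um = rowS A B * E * Δ ∧
    ((fromRows (1 : Matrix (Fin p) (Fin p) ℝ) Δᵀ)ᵀ * Φ * fromRows 1 Δᵀ).PosSemidef

/-- The matrix `N = [E, 𝐗] Φ̂ [E, 𝐗]ᵀ`. -/
def matN {n m p T : ℕ} (Xp Xm : Matrix (Fin n) (Fin T) ℝ) (Um : Matrix (Fin m) (Fin T) ℝ)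
    (E : Matrix (Fin n ⊕ (Fin n ⊕ Fin m)) (Fin p) ℝ)
    (Φ : Matrix (Fin p ⊕ Fin T) (Fin p ⊕ Fin T) ℝ) :
    Matrix (Fin n ⊕ (Fin n ⊕ Fin m)) (Fin n ⊕ (Fin n ⊕ Fin m)) ℝ :=
  fromCols E (dataX Xp Xm Um) * Φ * (fromCols E (dataX Xp Xm Um))ᵀ

/-
If `S 𝐗 = S E Δ̂`, then `S [E, 𝐗] = S E [I; Δ̂ᵀ]ᵀ`, so `S N Sᵀ` is the congruence
`(S E) ([I; Δ̂ᵀ]ᵀ Φ̂ [I; Δ̂ᵀ]) (S E)ᵀ` of the positive semidefinite matrix of the consistency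
condition, hence positive semidefinite itself.
-/

namespace Matrix

variable {l k q t R : Type*} [Fintype k] [Fintype q]

theorem mul_fromCols_eq_of_mul_eq [DecidableEq q] [Semiring R] {S : Matrix l k R}
    {E : Matrix k q R} {X : Matrix k t R} {Δ : Matrix q t R} (h : S * X = S * E * Δ) :
    S * fromCols E X = S * E * (fromRows (1 : Matrix q q R) Δᵀ)ᵀ := by
  rw [mul_fromCols, h, transpose_fromRows, transpose_one, transpose_transpose, mul_fromCols,
    Matrix.mul_one]

theorem PosSemidef.mul_mul_transpose_of_mul_eq_mul_transpose [Fintype l] [Fintype t]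
    {S : Matrix l k ℝ} {F : Matrix k t ℝ} {G : Matrix l q ℝ} {L : Matrix t q ℝ} {Φ : Matrix t t ℝ}
    (hΦ : (Lᵀ * Φ * L).PosSemidef) (hF : S * F = G * Lᵀ) :
    (S * (F * Φ * Fᵀ) * Sᵀ).PosSemidef := by
  have hcongr : S * (F * Φ * Fᵀ) * Sᵀ = G * (Lᵀ * Φ * L) * Gᵀ := by
    calc S * (F * Φ * Fᵀ) * Sᵀ = (S * F) * Φ * (S * F)ᵀ := by
          simp only [transpose_mul, Matrix.mul_assoc]
      _ = G * (Lᵀ * Φ * L) * Gᵀ := by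
          rw [hF, transpose_mul, transpose_transpose]
          simp only [Matrix.mul_assoc]
  rw [hcongr]
  simpa only [conjTranspose_eq_transpose_of_trivial] using hΦ.mul_mul_conjTranspose_same G

end Matrix

theorem Sigma_subset_SigmaBar_general (n m p T : ℕ)
    (Xp Xm : Matrix (Fin n) (Fin T) ℝ) (Um : Matrix (Fin m) (Fin T) ℝ)
    (E : Matrix (Fin n ⊕ (Fin n ⊕ Fin m)) (Fin p) ℝ)
    (Φ : Matrix (Fin p ⊕ Fin T) (Fin p ⊕ Fin T) ℝ)
    (A : Matrix (Fin n) (Fin n) ℝ) (B : Matrix (Fin n) (Fin m) ℝ)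
    (hAB : ConsistentDP Xp Xm Um E Φ A B) :
    (rowS A B * matN Xp Xm Um E Φ * (rowS A B)ᵀ).PosSemidef := by
  obtain ⟨Δ, hΔ, hΦΔ⟩ := hAB
  exact hΦΔ.mul_mul_transpose_of_mul_eq_mul_transpose (mul_fromCols_eq_of_mul_eq hΔ)

/-- Theorem 1, inclusion part: Σ ⊆ Σ̄. -/
theorem Sigma_subset_SigmaBar (n m p T : ℕ)
    (Xp Xm : Matrix (Fin n) (Fin T) ℝ) (Um : Matrix (Fin m) (Fin T) ℝ)
    (E : Matrix (Fin n ⊕ (Fin n ⊕ Fin m)) (Fin p) ℝ)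
    (Φ : Matrix (Fin p ⊕ Fin T) (Fin p ⊕ Fin T) ℝ) (hΦ : Φ.IsSymm)
    -- Φ̂ ∈ Π_{p,T}:
    (Φ22d : Matrix (Fin T) (Fin T) ℝ)
    (hΦMP : IsMoorePenroseInv Φ.toBlocks₂₂ Φ22d)
    (hΦ22 : (-(Φ.toBlocks₂₂)).PosSemidef)
    (hΦker : ∀ x : Fin T → ℝ, Φ.toBlocks₂₂ *ᵥ x = 0 → Φ.toBlocks₁₂ *ᵥ x = 0)
    (hΦSchur : (Φ.toBlocks₁₁ - Φ.toBlocks₁₂ * Φ22d * Φ.toBlocks₂₁).PosSemidef)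
    (A : Matrix (Fin n) (Fin n) ℝ) (B : Matrix (Fin n) (Fin m) ℝ)
    (hAB : ConsistentDP Xp Xm Um E Φ A B) :
    (rowS A B * matN Xp Xm Um E Φ * (rowS A B)ᵀ).PosSemidef :=
  Sigma_subset_SigmaBar_general n m p T Xp Xm Um E Φ A B hAB
end

section
/- Let Φ̂ ∈ Π_{p,T} and assume additionally that im E₀ ⊆ im E, where E₀ := [I_n; 0] ∈ ℝ^{(2n+m)×n} (the column space of E₀ is contained in that of E). Then Σ = Σ̄: a pair (A,B) is consistent with the data under data perturbation if and only if [I_n, A, B] N [I_n, A, B]ᵀ ⪰ 0 with N = [E, 𝐗] Φ̂ [E, 𝐗]ᵀ. -/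
/-!
Write `S = [I, A, B]`, `F = (S E)ᵀ` and `G = (S 𝐗)ᵀ`. Then `S N Sᵀ` is the `Φ̂`-quadratic form of
`[F; G]`, and `(A, B) ∈ Σ` asks for `Δ̂` with `Δ̂ᵀ F = G` whose form `[I; Δ̂ᵀ]ᵀ Φ̂ [I; Δ̂ᵀ]` is
positive semidefinite. Completing the square with `L Φ̂₂₂ = Φ̂₁₂`, and factoring the Schur
complement as `Qᴴ Q` and `-Φ̂₂₂` as `Cᴴ C`, the hypothesis `S N Sᵀ ⪰ 0` says
`‖C (G + Lᴴ F) x‖ ≤ ‖Q F x‖`.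
Douglas' lemma turns this into a contraction `K` with `C (G + Lᴴ F) = K Q F`. As `im E₀ ⊆ im E`,
`F` has a left inverse `F⁺`, and with a least-squares inverse `C⁺` of `C` the matrix
`Z = C⁺ K Q + (1 - C⁺ C) (G + Lᴴ F) F⁺` satisfies `Z F = G + Lᴴ F` and `(C Z)ᴴ (C Z) ≤ Qᴴ Q`;
`Δ̂ᵀ = Z - Lᴴ` is the required perturbation.
-/

open Matrix
open scoped MatrixOrder ComplexOrder

namespace Matrix

lemma mul_mul_eq_of_forall_mulVec_eq_zero {R : Type*} [CommRing R] {k m n : Type*} [Fintype m]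
    [Fintype n] [DecidableEq n] {M : Matrix m n R} {Md : Matrix n m R} (hM : M * Md * M = M)
    {N : Matrix k n R} (h : ∀ x, M *ᵥ x = 0 → N *ᵥ x = 0) : N * Md * M = N := by
  refine ext_of_mulVec_single fun i => ?_
  have hx := h (Pi.single i 1 - (Md * M) *ᵥ Pi.single i 1) (by
    rw [mulVec_sub, mulVec_mulVec, ← Matrix.mul_assoc, hM, sub_self])
  rw [mulVec_sub, sub_eq_zero, mulVec_mulVec] at hx
  rw [Matrix.mul_assoc, ← hx]

lemma exists_mul_eq_of_forall_exists_mulVec_eq {R : Type*} [CommSemiring R] {k m n : Type*}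
    [Fintype k] [DecidableEq k] [Fintype n] {A : Matrix m k R} {E : Matrix m n R}
    (h : ∀ y, ∃ z, A *ᵥ y = E *ᵥ z) : ∃ H : Matrix n k R, E * H = A := by
  choose z hz using h
  refine ⟨of fun j i => z (Pi.single i 1) j, ext_of_mulVec_single fun i => ?_⟩
  rw [← mulVec_mulVec, mulVec_single_one]
  exact (hz _).symm

lemma mul_one_sub_mul_eq_zero {R : Type*} [Ring R] {m n : Type*} [Fintype m] [Fintype n]
    [DecidableEq n] {A : Matrix m n R} {X : Matrix n m R} (h : A * X * A = A) :
    A * (1 - X * A) = 0 := by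
  rw [Matrix.mul_sub, Matrix.mul_one, ← Matrix.mul_assoc, h, sub_self]

variable {𝕜 : Type*} [RCLike 𝕜]

lemma conjTranspose_fromRows_mul_mul_fromRows {p t n : Type*} [Fintype p] [Fintype t]
    {Φ : Matrix (p ⊕ t) (p ⊕ t) 𝕜} (hΦ : Φ.IsHermitian) {L : Matrix p t 𝕜}
    (hL : L * Φ.toBlocks₂₂ = Φ.toBlocks₁₂) (F : Matrix p n 𝕜) (G : Matrix t n 𝕜) :
    (fromRows F G)ᴴ * Φ * fromRows F G =
      Fᴴ * (Φ.toBlocks₁₁ - L * Φ.toBlocks₂₁) * F +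
        (G + Lᴴ * F)ᴴ * Φ.toBlocks₂₂ * (G + Lᴴ * F) := by
  rw [← fromBlocks_toBlocks Φ, isHermitian_fromBlocks_iff] at hΦ
  obtain ⟨-, h12, -, h22⟩ := hΦ
  have hL' : Φ.toBlocks₂₂ * Lᴴ = Φ.toBlocks₂₁ := by
    rw [← h12, ← hL, conjTranspose_mul, h22.eq]
  conv_lhs => rw [← fromBlocks_toBlocks Φ]
  rw [conjTranspose_fromRows_eq_fromCols_conjTranspose, fromCols_mul_fromBlocks,
    fromCols_mul_fromRows]
  simp only [conjTranspose_add, conjTranspose_mul, conjTranspose_conjTranspose, Matrix.add_mul,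
    Matrix.mul_add, Matrix.sub_mul, Matrix.mul_sub]
  rw [← hL', ← hL]
  simp only [Matrix.mul_assoc]
  abel

variable {k m n p r s t : Type*} [Fintype k] [Fintype m] [Fintype n] [Fintype p] [Fintype r]
  [Fintype s] [Fintype t]

lemma IsHermitian.exists_hermitian_inner_inverse [DecidableEq n] {M : Matrix n n 𝕜}
    (hM : M.IsHermitian) : ∃ X : Matrix n n 𝕜, M * X * M = M ∧ X.IsHermitian := by
  have : ContinuousOn (fun x : ℝ => x⁻¹) (spectrum ℝ M) := M.finite_real_spectrum.continuousOn _
  refine ⟨cfc (fun x : ℝ => x⁻¹) M, ?_, cfc_predicate (fun x : ℝ => x⁻¹) M⟩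
  -- `x * x⁻¹ * x = x` holds also at `x = 0`, where `0⁻¹ = 0`
  calc M * cfc (fun x : ℝ => x⁻¹) M * M = cfc (fun x : ℝ => x * x⁻¹ * x) M := by
        rw [cfc_mul _ _ M, cfc_mul _ _ M, cfc_id' ℝ M]
    _ = M := by rw [cfc_congr (g := id) fun x _ => mul_inv_mul_cancel x, cfc_id ℝ M]

lemma exists_inner_inverse_isStarProjection [DecidableEq n] (A : Matrix m n 𝕜) :
    ∃ X : Matrix n m 𝕜, A * X * A = A ∧ IsStarProjection (A * X) := by
  obtain ⟨M, hM, hMh⟩ := (isHermitian_conjTranspose_mul_self A).exists_hermitian_inner_inverse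
  have hW : (A * (1 - M * (Aᴴ * A)))ᴴ * (A * (1 - M * (Aᴴ * A))) = 0 := by
    rw [conjTranspose_mul, Matrix.mul_assoc, ← Matrix.mul_assoc Aᴴ, mul_one_sub_mul_eq_zero hM,
      Matrix.mul_zero]
  have hA : A * (M * Aᴴ) * A = A := by
    have hA' := conjTranspose_mul_self_eq_zero.mp hW
    rw [Matrix.mul_sub, Matrix.mul_one, sub_eq_zero] at hA'
    rw [Matrix.mul_assoc, Matrix.mul_assoc, ← hA']
  refine ⟨M * Aᴴ, hA, ⟨?_, ?_⟩⟩
  · rw [IsIdempotentElem, ← Matrix.mul_assoc, hA]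
  · exact (by simpa only [Matrix.mul_assoc] using isHermitian_mul_mul_conjTranspose A hMh :
      (A * (M * Aᴴ)).IsHermitian)

lemma conjTranspose_mul_mul_le_conjTranspose_mul_mul {A B : Matrix n n 𝕜} (h : A ≤ B)
    (C : Matrix n m 𝕜) : Cᴴ * A * C ≤ Cᴴ * B * C := by
  rw [le_iff] at h ⊢
  simpa only [Matrix.mul_sub, Matrix.sub_mul] using h.conjTranspose_mul_mul_same C

/-- Douglas' factorization lemma. -/
lemma exists_mul_eq_of_conjTranspose_mul_self_le [DecidableEq m] [DecidableEq n]
    {Y : Matrix m n 𝕜} {D : Matrix k n 𝕜} (h : Dᴴ * D ≤ Yᴴ * Y) :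
    ∃ K : Matrix k m 𝕜, K * Y = D ∧ Kᴴ * K ≤ 1 := by
  obtain ⟨X, hX, hP⟩ := exists_inner_inverse_isStarProjection Y
  have hDW : D * (1 - X * Y) = 0 := by
    refine conjTranspose_mul_self_eq_zero.mp <|
      le_antisymm ?_ (posSemidef_conjTranspose_mul_self _).nonneg
    calc (D * (1 - X * Y))ᴴ * (D * (1 - X * Y))
        = (1 - X * Y)ᴴ * (Dᴴ * D) * (1 - X * Y) := by
          simp only [conjTranspose_mul, Matrix.mul_assoc]
      _ ≤ (1 - X * Y)ᴴ * (Yᴴ * Y) * (1 - X * Y) :=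
          conjTranspose_mul_mul_le_conjTranspose_mul_mul h _
      _ = 0 := by
          rw [Matrix.mul_assoc, Matrix.mul_assoc, mul_one_sub_mul_eq_zero hX, Matrix.mul_zero,
            Matrix.mul_zero]
  refine ⟨D * X, ?_, ?_⟩
  · rw [Matrix.mul_sub, Matrix.mul_one, sub_eq_zero] at hDW
    rw [Matrix.mul_assoc, ← hDW]
  · calc (D * X)ᴴ * (D * X) = Xᴴ * (Dᴴ * D) * X := by
          simp only [conjTranspose_mul, Matrix.mul_assoc]
      _ ≤ Xᴴ * (Yᴴ * Y) * X := conjTranspose_mul_mul_le_conjTranspose_mul_mul h X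
      _ = (Y * X)ᴴ * (Y * X) := by simp only [conjTranspose_mul, Matrix.mul_assoc]
      _ = Y * X := by
          rw [← star_eq_conjTranspose, hP.isSelfAdjoint.star_eq, hP.isIdempotentElem.eq]
      _ ≤ 1 := hP.le_one

lemma exists_mul_eq_and_conjTranspose_mul_self_le [DecidableEq n] [DecidableEq r] [DecidableEq s]
    [DecidableEq t] {Q : Matrix r p 𝕜} {C : Matrix s t 𝕜} {F : Matrix p n 𝕜} {Fd : Matrix n p 𝕜}
    (hF : Fd * F = 1) {G : Matrix t n 𝕜} (h : (C * G)ᴴ * (C * G) ≤ (Q * F)ᴴ * (Q * F)) :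
    ∃ Z : Matrix t p 𝕜, Z * F = G ∧ (C * Z)ᴴ * (C * Z) ≤ Qᴴ * Q := by
  obtain ⟨K, hK, hKK⟩ := exists_mul_eq_of_conjTranspose_mul_self_le h
  obtain ⟨Cd, hC, hP⟩ := exists_inner_inverse_isStarProjection C
  set Z := Cd * K * Q + (1 - Cd * C) * G * Fd with hZ
  refine ⟨Z, ?_, ?_⟩
  · calc Z * F = Cd * (K * (Q * F)) + G - Cd * (C * G) := by
          simp only [hZ, Matrix.add_mul, Matrix.sub_mul, Matrix.one_mul, Matrix.mul_assoc, hF,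
            Matrix.mul_one]
          abel
      _ = G := by rw [hK, add_sub_cancel_left]
  · have hCZ : C * Z = C * Cd * (K * Q) := by
      simp only [hZ, Matrix.mul_add, ← Matrix.mul_assoc, mul_one_sub_mul_eq_zero hC,
        Matrix.zero_mul, add_zero]
    calc (C * Z)ᴴ * (C * Z) = (K * Q)ᴴ * (C * Cd) * (K * Q) := by
          rw [hCZ, conjTranspose_mul, ← star_eq_conjTranspose, hP.isSelfAdjoint.star_eq,
            Matrix.mul_assoc, ← Matrix.mul_assoc (C * Cd), hP.isIdempotentElem.eq]
          simp only [Matrix.mul_assoc]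
      _ ≤ (K * Q)ᴴ * 1 * (K * Q) := conjTranspose_mul_mul_le_conjTranspose_mul_mul hP.le_one _
      _ = Qᴴ * (Kᴴ * K) * Q := by simp only [conjTranspose_mul, Matrix.mul_one, Matrix.mul_assoc]
      _ ≤ Qᴴ * 1 * Q := conjTranspose_mul_mul_le_conjTranspose_mul_mul hKK Q
      _ = Qᴴ * Q := by rw [Matrix.mul_one]

/-- The hypotheses on `Φ` say `Φ ∈ Π_{p,t}`: the generalized Schur complement is written with any
`L` solving `L Φ₂₂ = Φ₁₂` (for instance `L = Φ₁₂ Φ₂₂†`). -/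
theorem exists_conjTranspose_mul_eq_and_posSemidef_iff [DecidableEq n] [DecidableEq p]
    [DecidableEq t] {Φ : Matrix (p ⊕ t) (p ⊕ t) 𝕜} (hΦ : Φ.IsHermitian)
    (h22 : (-Φ.toBlocks₂₂).PosSemidef) {L : Matrix p t 𝕜} (hL : L * Φ.toBlocks₂₂ = Φ.toBlocks₁₂)
    (hS : (Φ.toBlocks₁₁ - L * Φ.toBlocks₂₁).PosSemidef)
    {F : Matrix p n 𝕜} {Fd : Matrix n p 𝕜} (hF : Fd * F = 1) (G : Matrix t n 𝕜) :
    (∃ Δ : Matrix p t 𝕜, Δᴴ * F = G ∧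
        ((fromRows (1 : Matrix p p 𝕜) Δᴴ)ᴴ * Φ * fromRows (1 : Matrix p p 𝕜) Δᴴ).PosSemidef) ↔
      ((fromRows F G)ᴴ * Φ * fromRows F G).PosSemidef := by
  constructor
  · rintro ⟨Δ, rfl, hΔ⟩
    have hFG : fromRows F (Δᴴ * F) = fromRows 1 Δᴴ * F := by rw [fromRows_mul, Matrix.one_mul]
    rw [hFG, conjTranspose_mul]
    simpa only [Matrix.mul_assoc] using hΔ.conjTranspose_mul_mul_same F
  · intro h
    obtain ⟨Q, hQ⟩ := CStarAlgebra.nonneg_iff_eq_star_mul_self.mp hS.nonneg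
    obtain ⟨C, hC⟩ := CStarAlgebra.nonneg_iff_eq_star_mul_self.mp h22.nonneg
    rw [star_eq_conjTranspose] at hQ hC
    rw [neg_eq_iff_eq_neg] at hC
    rw [conjTranspose_fromRows_mul_mul_fromRows hΦ hL, hQ, hC, ← nonneg_iff_posSemidef] at h
    obtain ⟨Z, hZF, hZ⟩ := exists_mul_eq_and_conjTranspose_mul_self_le (Q := Q) (C := C) hF
      (G := G + Lᴴ * F) (by
        rw [← sub_nonneg]
        simpa only [conjTranspose_mul, Matrix.mul_neg, Matrix.neg_mul, Matrix.mul_assoc,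
          sub_eq_add_neg] using h)
    refine ⟨(Z - Lᴴ)ᴴ, ?_, ?_⟩
    · rw [conjTranspose_conjTranspose, Matrix.sub_mul, hZF, add_sub_cancel_right]
    · rw [conjTranspose_fromRows_mul_mul_fromRows hΦ hL, conjTranspose_conjTranspose]
      simp only [conjTranspose_one, Matrix.one_mul, Matrix.mul_one, sub_add_cancel]
      rw [hQ, hC, ← nonneg_iff_posSemidef]
      simpa only [conjTranspose_mul, Matrix.mul_neg, Matrix.neg_mul, Matrix.mul_assoc,
        ← sub_eq_add_neg] using sub_nonneg.mpr hZ

end Matrix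

lemma rowS_mul_fromRows_one_zero {n m : ℕ} (A : Matrix (Fin n) (Fin n) ℝ)
    (B : Matrix (Fin n) (Fin m) ℝ) :
    rowS A B * fromRows (1 : Matrix (Fin n) (Fin n) ℝ) (0 : Matrix (Fin n ⊕ Fin m) (Fin n) ℝ)
      = 1 := by
  simp [rowS, fromCols_mul_fromRows]

lemma rowS_mul_matN_mul_transpose {n m p T : ℕ} (Xp Xm : Matrix (Fin n) (Fin T) ℝ)
    (Um : Matrix (Fin m) (Fin T) ℝ) (E : Matrix (Fin n ⊕ (Fin n ⊕ Fin m)) (Fin p) ℝ)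
    (Φ : Matrix (Fin p ⊕ Fin T) (Fin p ⊕ Fin T) ℝ) (A : Matrix (Fin n) (Fin n) ℝ)
    (B : Matrix (Fin n) (Fin m) ℝ) :
    rowS A B * matN Xp Xm Um E Φ * (rowS A B)ᵀ =
      (fromRows (rowS A B * E)ᵀ (rowS A B * dataX Xp Xm Um)ᵀ)ᵀ * Φ *
        fromRows (rowS A B * E)ᵀ (rowS A B * dataX Xp Xm Um)ᵀ := by
  rw [← transpose_fromCols, transpose_transpose, ← mul_fromCols, matN]
  simp only [transpose_mul, Matrix.mul_assoc]

/-- Theorem 1, equality part under im E₀ ⊆ im E: Σ = Σ̄. -/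
theorem Sigma_eq_SigmaBar_of_im_subset (n m p T : ℕ)
    (Xp Xm : Matrix (Fin n) (Fin T) ℝ) (Um : Matrix (Fin m) (Fin T) ℝ)
    (E : Matrix (Fin n ⊕ (Fin n ⊕ Fin m)) (Fin p) ℝ)
    (Φ : Matrix (Fin p ⊕ Fin T) (Fin p ⊕ Fin T) ℝ) (hΦ : Φ.IsSymm)
    -- Φ̂ ∈ Π_{p,T}:
    (Φ22d : Matrix (Fin T) (Fin T) ℝ)
    (hΦMP : IsMoorePenroseInv Φ.toBlocks₂₂ Φ22d)
    (hΦ22 : (-(Φ.toBlocks₂₂)).PosSemidef)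
    (hΦker : ∀ x : Fin T → ℝ, Φ.toBlocks₂₂ *ᵥ x = 0 → Φ.toBlocks₁₂ *ᵥ x = 0)
    (hΦSchur : (Φ.toBlocks₁₁ - Φ.toBlocks₁₂ * Φ22d * Φ.toBlocks₂₁).PosSemidef)
    -- im E₀ ⊆ im E, where E₀ = [I_n; 0]:
    (hE : ∀ y : Fin n → ℝ, ∃ z : Fin p → ℝ,
      (fromRows (1 : Matrix (Fin n) (Fin n) ℝ)
        (0 : Matrix (Fin n ⊕ Fin m) (Fin n) ℝ)) *ᵥ y = E *ᵥ z)
    (A : Matrix (Fin n) (Fin n) ℝ) (B : Matrix (Fin n) (Fin m) ℝ) :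
    ConsistentDP Xp Xm Um E Φ A B ↔
    (rowS A B * matN Xp Xm Um E Φ * (rowS A B)ᵀ).PosSemidef := by
  obtain ⟨H, hH⟩ := exists_mul_eq_of_forall_exists_mulVec_eq hE
  have hF : Hᵀ * (rowS A B * E)ᵀ = 1 := by
    rw [← transpose_mul, Matrix.mul_assoc, hH, rowS_mul_fromRows_one_zero, transpose_one]
  have key := exists_conjTranspose_mul_eq_and_posSemidef_iff (isHermitian_iff_isSymm.mpr hΦ)
    hΦ22 (mul_mul_eq_of_forall_mulVec_eq_zero hΦMP.1 hΦker) hΦSchur hF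
    (rowS A B * dataX Xp Xm Um)ᵀ
  simp only [conjTranspose_eq_transpose_of_trivial] at key
  rw [ConsistentDP, rowS_mul_matN_mul_transpose, ← key]
  refine exists_congr fun Δ => and_congr_left' ?_
  rw [← transpose_mul, transpose_inj, eq_comm]
end

section
/- Let Φ̂ ∈ Π_{p,T} and assume Σ is nonempty (it contains the true system). If there exist a symmetric positive definite P ∈ ℝ^{n×n}, a matrix L ∈ ℝ^{m×n}, and a scalar β > 0 such that the (3n+m)×(3n+m) block matrix [[P − β I_n, 0, 0, 0],[0, −P, −Lᵀ, 0],[0, −L, 0, L],[0, 0, Lᵀ, P]] − [[N, 0],[0, 0]] ⪰ 0 (block sizes n, n, m, n, with N ∈ ℝ^{(2n+m)×(2n+m)} occupying the top-left (2n+m)×(2n+m) corner), then the data is informative for quadratic stabilization; moreover the controller K = L P⁻¹ satisfies P − (A + B K) P (A + B K)ᵀ ≻ 0 for all (A,B) ∈ Σ. -/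
open Matrix

/-- The `(3n+m)×(3n+m)` LMI (block sizes `n, n, m, n`,
with `N` in the top-left `(2n+m)×(2n+m)` corner). -/
def LMIcond {n m : ℕ} (P : Matrix (Fin n) (Fin n) ℝ) (L : Matrix (Fin m) (Fin n) ℝ) (β : ℝ)
    (N : Matrix (Fin n ⊕ (Fin n ⊕ Fin m)) (Fin n ⊕ (Fin n ⊕ Fin m)) ℝ) : Prop :=
  (fromBlocks
      (fromBlocks (P - β • 1) 0 0 (fromBlocks (-P) (-Lᵀ) (-L) 0))
      (fromRows 0 (fromRows 0 L))
      (fromCols 0 (fromCols 0 Lᵀ))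
      P
    - fromBlocks N 0 0 0).PosSemidef

/-!
Fix `(A, B) ∈ Σ`, put `S = [I, A, B]` and `K = L P⁻¹`, so that `L = K P`. Congruence of the
LMI by `Z = [S, -B K]` turns it into
`P - β I - (A + B K) P (A + B K)ᵀ - S N Sᵀ ⪰ 0`.
The data equation `S 𝐗 = S E Δ̂` gives `S [E, 𝐗] = S E [I, Δ̂]`, hence
`S N Sᵀ = (S E) ([I; Δ̂ᵀ]ᵀ Φ̂ [I; Δ̂ᵀ]) (S E)ᵀ ⪰ 0`, and therefore
`P - (A + B K) P (A + B K)ᵀ ⪰ β I ≻ 0`.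
-/

lemma Matrix.PosSemidef.mul_mul_transpose_same {m n : Type*} [Fintype n] [Finite m]
    {M : Matrix n n ℝ} (hM : M.PosSemidef) (B : Matrix m n ℝ) : (B * M * Bᵀ).PosSemidef := by
  simpa only [conjTranspose_eq_transpose_of_trivial] using hM.mul_mul_conjTranspose_same B

section Congruence

variable {ι κ π : Type*} [Fintype κ] [Fintype π]

lemma posSemidef_mul_fromCols_mul_transpose_of_mul_eq {τ : Type*} [Fintype τ] [Finite ι]
    [DecidableEq π] (S : Matrix ι κ ℝ) (E : Matrix κ π ℝ) (X : Matrix κ τ ℝ)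
    (Δ : Matrix π τ ℝ) (Φ : Matrix (π ⊕ τ) (π ⊕ τ) ℝ) (hSX : S * X = S * E * Δ)
    (hΦ : ((fromRows (1 : Matrix π π ℝ) Δᵀ)ᵀ * Φ * fromRows 1 Δᵀ).PosSemidef) :
    (S * (fromCols E X * Φ * (fromCols E X)ᵀ) * Sᵀ).PosSemidef := by
  set R := fromRows (1 : Matrix π π ℝ) Δᵀ
  have hfactor : S * fromCols E X = S * E * Rᵀ := by
    rw [transpose_fromRows, transpose_one, transpose_transpose, mul_fromCols, mul_fromCols,
      Matrix.mul_one, hSX]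
  have hcongr : S * (fromCols E X * Φ * (fromCols E X)ᵀ) * Sᵀ = S * E * (Rᵀ * Φ * R) * (S * E)ᵀ :=
    calc S * (fromCols E X * Φ * (fromCols E X)ᵀ) * Sᵀ
        = S * fromCols E X * Φ * (S * fromCols E X)ᵀ := by
          simp only [transpose_mul, Matrix.mul_assoc]
      _ = S * E * (Rᵀ * Φ * R) * (S * E)ᵀ := by
          simp only [hfactor, transpose_mul, transpose_transpose, Matrix.mul_assoc]
  rw [hcongr]
  exact hΦ.mul_mul_transpose_same (S * E)

lemma fromCols_mul_fromBlocks_zero_mul_transpose (S : Matrix ι κ ℝ) (V : Matrix ι π ℝ)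
    (N : Matrix κ κ ℝ) :
    fromCols S V * fromBlocks N 0 0 (0 : Matrix π π ℝ) * (fromCols S V)ᵀ = S * N * Sᵀ := by
  simp only [transpose_fromCols, fromCols_mul_fromBlocks, fromCols_mul_fromRows,
    Matrix.mul_zero, Matrix.zero_mul, add_zero]

end Congruence

lemma ConsistentDP.posSemidef_rowS_mul_matN {n m p T : ℕ}
    {Xp Xm : Matrix (Fin n) (Fin T) ℝ} {Um : Matrix (Fin m) (Fin T) ℝ}
    {E : Matrix (Fin n ⊕ (Fin n ⊕ Fin m)) (Fin p) ℝ} {Φ : Matrix (Fin p ⊕ Fin T) (Fin p ⊕ Fin T) ℝ}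
    {A : Matrix (Fin n) (Fin n) ℝ} {B : Matrix (Fin n) (Fin m) ℝ}
    (h : ConsistentDP Xp Xm Um E Φ A B) :
    (rowS A B * matN Xp Xm Um E Φ * (rowS A B)ᵀ).PosSemidef := by
  obtain ⟨Δ, hdata, hQMI⟩ := h
  exact posSemidef_mul_fromCols_mul_transpose_of_mul_eq _ _ _ Δ Φ hdata hQMI

section Lyapunov

variable {n m : ℕ} {P : Matrix (Fin n) (Fin n) ℝ} {K : Matrix (Fin m) (Fin n) ℝ} {β : ℝ}
  {N : Matrix (Fin n ⊕ (Fin n ⊕ Fin m)) (Fin n ⊕ (Fin n ⊕ Fin m)) ℝ}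

lemma fromCols_rowS_mul_lmi_mul_transpose (hPT : Pᵀ = P) (A : Matrix (Fin n) (Fin n) ℝ)
    (B : Matrix (Fin n) (Fin m) ℝ) :
    fromCols (rowS A B) (-(B * K)) *
        fromBlocks
          (fromBlocks (P - β • 1) 0 0 (fromBlocks (-P) (-(K * P)ᵀ) (-(K * P)) 0))
          (fromRows 0 (fromRows 0 (K * P)))
          (fromCols 0 (fromCols 0 (K * P)ᵀ))
          P *
        (fromCols (rowS A B) (-(B * K)))ᵀ
      = P - β • 1 - (A + B * K) * P * (A + B * K)ᵀ := by
  simp only [rowS, transpose_fromCols, transpose_one, fromCols_mul_fromBlocks, mul_fromCols,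
    fromCols_mul_fromRows, transpose_mul, transpose_add,
    transpose_neg, hPT, Matrix.mul_zero, Matrix.zero_mul, Matrix.mul_one, Matrix.one_mul,
    Matrix.add_mul, Matrix.mul_add, Matrix.mul_neg, Matrix.neg_mul, Matrix.mul_sub,
    add_zero, zero_add, Matrix.mul_assoc]
  abel

lemma LMIcond.posSemidef_sub_rowS_mul_mul_transpose (hPT : Pᵀ = P)
    (hLMI : LMIcond P (K * P) β N) (A : Matrix (Fin n) (Fin n) ℝ) (B : Matrix (Fin n) (Fin m) ℝ) :
    (P - β • 1 - (A + B * K) * P * (A + B * K)ᵀ - rowS A B * N * (rowS A B)ᵀ).PosSemidef := by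
  have := hLMI.mul_mul_transpose_same (fromCols (rowS A B) (-(B * K)))
  rwa [Matrix.mul_sub, Matrix.sub_mul, fromCols_rowS_mul_lmi_mul_transpose hPT,
    fromCols_mul_fromBlocks_zero_mul_transpose] at this

lemma LMIcond.posDef_sub_closedLoop_of_consistentDP {p T : ℕ}
    {Xp Xm : Matrix (Fin n) (Fin T) ℝ} {Um : Matrix (Fin m) (Fin T) ℝ}
    {E : Matrix (Fin n ⊕ (Fin n ⊕ Fin m)) (Fin p) ℝ} {Φ : Matrix (Fin p ⊕ Fin T) (Fin p ⊕ Fin T) ℝ}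
    (hPT : Pᵀ = P) (hβ : 0 < β) (hLMI : LMIcond P (K * P) β (matN Xp Xm Um E Φ))
    {A : Matrix (Fin n) (Fin n) ℝ} {B : Matrix (Fin n) (Fin m) ℝ}
    (hAB : ConsistentDP Xp Xm Um E Φ A B) :
    (P - (A + B * K) * P * (A + B * K)ᵀ).PosDef := by
  have hβI : (β • (1 : Matrix (Fin n) (Fin n) ℝ)).PosDef := by
    simpa only [smul_one_eq_diagonal] using PosDef.diagonal fun _ => hβ
  have hsplit : P - (A + B * K) * P * (A + B * K)ᵀ
      = (P - β • 1 - (A + B * K) * P * (A + B * K)ᵀ - rowS A B * matN Xp Xm Um E Φ * (rowS A B)ᵀ)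
        + rowS A B * matN Xp Xm Um E Φ * (rowS A B)ᵀ + β • 1 := by
    abel
  rw [hsplit]
  exact PosDef.posSemidef_add ((hLMI.posSemidef_sub_rowS_mul_mul_transpose hPT A B).add
    hAB.posSemidef_rowS_mul_matN) hβI

end Lyapunov

theorem informativity_data_perturbation_sufficient_general (n m p T : ℕ)
    (Xp Xm : Matrix (Fin n) (Fin T) ℝ) (Um : Matrix (Fin m) (Fin T) ℝ)
    (E : Matrix (Fin n ⊕ (Fin n ⊕ Fin m)) (Fin p) ℝ)
    (Φ : Matrix (Fin p ⊕ Fin T) (Fin p ⊕ Fin T) ℝ)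
    (P : Matrix (Fin n) (Fin n) ℝ) (L : Matrix (Fin m) (Fin n) ℝ) (β : ℝ)
    (hP : P.PosDef) (hβ : 0 < β)
    (hLMI : LMIcond P L β (matN Xp Xm Um E Φ)) :
    -- the data is informative for quadratic stabilization:
    (∃ (K : Matrix (Fin m) (Fin n) ℝ) (P' : Matrix (Fin n) (Fin n) ℝ), P'.PosDef ∧
      ∀ A B, ConsistentDP Xp Xm Um E Φ A B →
        (P' - (A + B * K) * P' * (A + B * K)ᵀ).PosDef) ∧
    -- moreover K = L P⁻¹ works with the Lyapunov matrix P: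
    (∀ A B, ConsistentDP Xp Xm Um E Φ A B →
      (P - (A + B * (L * P⁻¹)) * P * (A + B * (L * P⁻¹))ᵀ).PosDef) := by
  have hPT : Pᵀ = P := by simpa only [conjTranspose_eq_transpose_of_trivial] using hP.1.eq
  have hL : L * P⁻¹ * P = L := by
    rw [Matrix.mul_assoc, nonsing_inv_mul _ hP.det_pos.ne'.isUnit, Matrix.mul_one]
  rw [← hL] at hLMI
  have hstab : ∀ A B, ConsistentDP Xp Xm Um E Φ A B →
      (P - (A + B * (L * P⁻¹)) * P * (A + B * (L * P⁻¹))ᵀ).PosDef :=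
    fun _ _ hAB => hLMI.posDef_sub_closedLoop_of_consistentDP hPT hβ hAB
  exact ⟨⟨L * P⁻¹, P, hP, hstab⟩, hstab⟩

/-- Theorem 3, sufficiency: feasibility of the LMI implies informativity for quadratic
stabilization, and the controller `K = L P⁻¹` stabilizes every system in Σ. -/
theorem informativity_data_perturbation_sufficient (n m p T : ℕ)
    (Xp Xm : Matrix (Fin n) (Fin T) ℝ) (Um : Matrix (Fin m) (Fin T) ℝ)
    (E : Matrix (Fin n ⊕ (Fin n ⊕ Fin m)) (Fin p) ℝ)
    (Φ : Matrix (Fin p ⊕ Fin T) (Fin p ⊕ Fin T) ℝ) (hΦ : Φ.IsSymm)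
    -- Φ̂ ∈ Π_{p,T}:
    (Φ22d : Matrix (Fin T) (Fin T) ℝ)
    (hΦMP : IsMoorePenroseInv Φ.toBlocks₂₂ Φ22d)
    (hΦ22 : (-(Φ.toBlocks₂₂)).PosSemidef)
    (hΦker : ∀ x : Fin T → ℝ, Φ.toBlocks₂₂ *ᵥ x = 0 → Φ.toBlocks₁₂ *ᵥ x = 0)
    (hΦSchur : (Φ.toBlocks₁₁ - Φ.toBlocks₁₂ * Φ22d * Φ.toBlocks₂₁).PosSemidef)
    -- Σ is nonempty:
    (hNonempty : ∃ (A : Matrix (Fin n) (Fin n) ℝ) (B : Matrix (Fin n) (Fin m) ℝ),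
      ConsistentDP Xp Xm Um E Φ A B)
    (P : Matrix (Fin n) (Fin n) ℝ) (L : Matrix (Fin m) (Fin n) ℝ) (β : ℝ)
    (hP : P.PosDef) (hβ : 0 < β)
    (hLMI : LMIcond P L β (matN Xp Xm Um E Φ)) :
    -- the data is informative for quadratic stabilization:
    (∃ (K : Matrix (Fin m) (Fin n) ℝ) (P' : Matrix (Fin n) (Fin n) ℝ), P'.PosDef ∧
      ∀ A B, ConsistentDP Xp Xm Um E Φ A B →
        (P' - (A + B * K) * P' * (A + B * K)ᵀ).PosDef) ∧
    -- moreover K = L P⁻¹ works with the Lyapunov matrix P: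
    (∀ A B, ConsistentDP Xp Xm Um E Φ A B →
      (P - (A + B * (L * P⁻¹)) * P * (A + B * (L * P⁻¹))ᵀ).PosDef) :=
  informativity_data_perturbation_sufficient_general n m p T Xp Xm Um E Φ P L β hP hβ hLMI
end

section
/- Let Φ^W ∈ ℝ^{(n+T)×(n+T)} be symmetric and define N^W := [[I_n, X₊],[0, −X₋],[0, −U₋]] Φ^W [[I_n, X₊],[0, −X₋],[0, −U₋]]ᵀ ∈ ℝ^{(2n+m)×(2n+m)}. Then a pair (A,B) ∈ ℝ^{n×n} × ℝ^{n×m} satisfies: there exists W₋ ∈ ℝ^{n×T} with X₊ = A X₋ + B U₋ + W₋ and [I_n; W₋ᵀ]ᵀ Φ^W [I_n; W₋ᵀ] ⪰ 0, if and only if [I_n, A, B] N^W [I_n, A, B]ᵀ ⪰ 0. -/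
/-!
The data equation forces `W = Xp - A Xm - B Um`, and `[I, A, B]` times the data block matrix is
exactly `[I, W]`; so both sides are positivity of the same matrix `[I, W] Φ [I, W]ᵀ`.
-/

open Matrix

lemma fromCols_one_fromCols_mul_fromBlocks {R l m t : Type*} [Ring R]
    [Fintype m] [Fintype l] [DecidableEq l]
    (A : Matrix l l R) (B : Matrix l m R) (Xp Xm : Matrix l t R) (Um : Matrix m t R) :
    fromCols (1 : Matrix l l R) (fromCols A B) *
        fromBlocks (1 : Matrix l l R) Xp 0 (fromRows (-Xm) (-Um)) =
      fromCols 1 (Xp - A * Xm - B * Um) := by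
  rw [fromCols_mul_fromBlocks, fromCols_mul_fromRows]
  simp only [Matrix.mul_zero, Matrix.one_mul, Matrix.mul_neg, add_zero, sub_eq_add_neg,
    add_assoc]

lemma mul_mul_transpose_mul_transpose {R l n k : Type*} [CommRing R]
    [Fintype n] [Fintype k] (M : Matrix l n R) (N : Matrix n k R) (Φ : Matrix k k R) :
    M * (N * Φ * Nᵀ) * Mᵀ = M * N * Φ * (M * N)ᵀ := by
  simp only [transpose_mul, Matrix.mul_assoc]

lemma transpose_fromRows_one {R l t : Type*} [Zero R] [One R] [DecidableEq l]
    (W : Matrix l t R) : (fromRows (1 : Matrix l l R) Wᵀ)ᵀ = fromCols 1 W := by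
  rw [transpose_fromRows, transpose_one, transpose_transpose]

theorem system_set_qmi_characterization_general (n m T : ℕ)
    (Xp Xm : Matrix (Fin n) (Fin T) ℝ) (Um : Matrix (Fin m) (Fin T) ℝ)
    (Φ : Matrix (Fin n ⊕ Fin T) (Fin n ⊕ Fin T) ℝ)
    (A : Matrix (Fin n) (Fin n) ℝ) (B : Matrix (Fin n) (Fin m) ℝ) :
    (∃ W : Matrix (Fin n) (Fin T) ℝ,
        Xp = A * Xm + B * Um + W ∧
        ((fromRows (1 : Matrix (Fin n) (Fin n) ℝ) Wᵀ)ᵀ * Φ * fromRows 1 Wᵀ).PosSemidef) ↔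
    (fromCols (1 : Matrix (Fin n) (Fin n) ℝ) (fromCols A B) *
        (fromBlocks 1 Xp (0 : Matrix (Fin n ⊕ Fin m) (Fin n) ℝ) (fromRows (-Xm) (-Um)) * Φ *
          (fromBlocks 1 Xp (0 : Matrix (Fin n ⊕ Fin m) (Fin n) ℝ) (fromRows (-Xm) (-Um)))ᵀ) *
        (fromCols (1 : Matrix (Fin n) (Fin n) ℝ) (fromCols A B))ᵀ).PosSemidef := by
  have noise_eq : ∀ W, Xp = A * Xm + B * Um + W ↔ W = Xp - A * Xm - B * Um := fun W => by
    constructor <;> rintro rfl <;> abel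
  simp only [noise_eq, exists_eq_left, mul_mul_transpose_mul_transpose,
    fromCols_one_fromCols_mul_fromBlocks]
  rw [← transpose_fromRows_one, transpose_transpose]
  -- the outer product on the left elaborates to the (defeq) `CStarMatrix` multiplication
  exact Iff.rfl

/-- Proposition 2: QMI characterization of the admissible system set under system noise. -/
theorem system_set_qmi_characterization (n m T : ℕ)
    (Xp Xm : Matrix (Fin n) (Fin T) ℝ) (Um : Matrix (Fin m) (Fin T) ℝ)
    (Φ : Matrix (Fin n ⊕ Fin T) (Fin n ⊕ Fin T) ℝ) (hΦ : Φ.IsSymm)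
    (A : Matrix (Fin n) (Fin n) ℝ) (B : Matrix (Fin n) (Fin m) ℝ) :
    (∃ W : Matrix (Fin n) (Fin T) ℝ,
        Xp = A * Xm + B * Um + W ∧
        ((fromRows (1 : Matrix (Fin n) (Fin n) ℝ) Wᵀ)ᵀ * Φ * fromRows 1 Wᵀ).PosSemidef) ↔
    (fromCols (1 : Matrix (Fin n) (Fin n) ℝ) (fromCols A B) *
        (fromBlocks 1 Xp (0 : Matrix (Fin n ⊕ Fin m) (Fin n) ℝ) (fromRows (-Xm) (-Um)) * Φ *
          (fromBlocks 1 Xp (0 : Matrix (Fin n ⊕ Fin m) (Fin n) ℝ) (fromRows (-Xm) (-Um)))ᵀ) *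
        (fromCols (1 : Matrix (Fin n) (Fin n) ℝ) (fromCols A B))ᵀ).PosSemidef :=
  system_set_qmi_characterization_general n m T Xp Xm Um Φ A B
end

section
/- For real matrices A ∈ ℝ^{q×p} and B ∈ ℝ^{r×p}, the inequality AᵀA ⪰ BᵀB holds if and only if there exists a matrix M ∈ ℝ^{r×q} such that B = M A and MᵀM ⪯ I_q. -/
/-!
Reading `x ⬝ᵥ (Cᵀ * C) *ᵥ x` as `‖C x‖²`, the inequality `AᵀA ⪰ BᵀB` says `‖B x‖ ≤ ‖A x‖` for
all `x`, and `MᵀM ⪯ I` says that `M` is a contraction; so `B = M A` gives the inequality at once.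
Conversely, `‖B x‖ ≤ ‖A x‖` forces `ker A ≤ ker B`, so `A x ↦ B x` is a well-defined contraction
on `range A`, and precomposing it with the orthogonal projection onto `range A` extends it to a
contraction of the whole space.
-/

open Matrix WithLp

namespace LinearMap

theorem exists_comp_rangeRestrict_eq {R E F G : Type*} [Ring R] [AddCommGroup E] [Module R E]
    [AddCommGroup F] [Module R F] [AddCommGroup G] [Module R G]
    {f : E →ₗ[R] F} {g : E →ₗ[R] G} (hker : ker f ≤ ker g) :
    ∃ m : range f →ₗ[R] G, m ∘ₗ f.rangeRestrict = g :=
  ⟨(ker f).liftQ g hker ∘ₗ f.quotKerEquivRange.symm.toLinearMap, by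
    ext x
    exact congrArg ((ker f).liftQ g hker) (f.quotKerEquivRange_symm_apply_image x _)⟩

theorem exists_comp_eq_of_norm_le {𝕜 E F G : Type*} [RCLike 𝕜] [AddCommGroup E] [Module 𝕜 E]
    [NormedAddCommGroup F] [InnerProductSpace 𝕜 F] [NormedAddCommGroup G] [Module 𝕜 G]
    {f : E →ₗ[𝕜] F} {g : E →ₗ[𝕜] G} [(range f).HasOrthogonalProjection]
    (h : ∀ x, ‖g x‖ ≤ ‖f x‖) :
    ∃ m : F →ₗ[𝕜] G, g = m ∘ₗ f ∧ ∀ y, ‖m y‖ ≤ ‖y‖ := by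
  have hker : ker f ≤ ker g := fun x hx ↦ by
    simpa [mem_ker.1 hx] using h x
  obtain ⟨m₀, hm₀⟩ := exists_comp_rangeRestrict_eq hker
  set P := (range f).orthogonalProjectionOnto
  refine ⟨m₀ ∘ₗ P.toLinearMap, ?_, fun y ↦ ?_⟩
  · rw [← hm₀]
    ext x
    exact congrArg m₀
      (Submodule.orthogonalProjectionOnto_mem_subspace_eq_self (f.rangeRestrict x)).symm
  · obtain ⟨x, hx⟩ := (P y).2
    calc ‖m₀ (P y)‖ = ‖g x‖ := by
          rw [← hm₀, comp_apply]
          exact congrArg (‖m₀ ·‖) (Subtype.ext hx.symm)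
      _ ≤ ‖f x‖ := h x
      _ ≤ ‖y‖ := hx ▸ (range f).norm_starProjection_apply_le y

end LinearMap

namespace Matrix

variable {m n k : Type*} [Fintype m] [Fintype n] [Fintype k] [DecidableEq n]

theorem dotProduct_transpose_mul_self_mulVec (C : Matrix m n ℝ) (x : n → ℝ) :
    x ⬝ᵥ (Cᵀ * C) *ᵥ x = ‖toEuclideanLin C (toLp 2 x)‖ ^ 2 := by
  rw [← mulVec_mulVec, dotProduct_mulVec, vecMul_transpose, toLpLin_toLp,
    EuclideanSpace.real_norm_sq_eq]
  simp [dotProduct, sq]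

theorem posSemidef_transpose_mul_self_sub_iff_norm_le (C : Matrix m n ℝ) (D : Matrix k n ℝ) :
    (Cᵀ * C - Dᵀ * D).PosSemidef ↔ ∀ x, ‖toEuclideanLin D x‖ ≤ ‖toEuclideanLin C x‖ := by
  have hHerm : (Cᵀ * C - Dᵀ * D).IsHermitian := by
    simpa using (isHermitian_conjTranspose_mul_self C).sub (isHermitian_conjTranspose_mul_self D)
  simp_rw [posSemidef_iff_dotProduct_mulVec, and_iff_right hHerm, star_trivial, sub_mulVec,
    dotProduct_sub, dotProduct_transpose_mul_self_mulVec, sub_nonneg]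
  exact (WithLp.equiv 2 (n → ℝ)).symm.forall_congr fun x ↦
    pow_le_pow_iff_left₀ (norm_nonneg _) (norm_nonneg _) two_ne_zero

theorem posSemidef_one_sub_transpose_mul_self_iff_norm_le (M : Matrix m n ℝ) :
    (1 - Mᵀ * M).PosSemidef ↔ ∀ y, ‖toEuclideanLin M y‖ ≤ ‖y‖ := by
  simpa using posSemidef_transpose_mul_self_sub_iff_norm_le (1 : Matrix n n ℝ) M

end Matrix

/-- Lemma A.1: `AᵀA ⪰ BᵀB` iff `B = M A` for some contraction `M` (i.e. `MᵀM ⪯ I`). -/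
theorem param_lemma (p q r : ℕ)
    (A : Matrix (Fin q) (Fin p) ℝ) (B : Matrix (Fin r) (Fin p) ℝ) :
    (Aᵀ * A - Bᵀ * B).PosSemidef ↔
    ∃ M : Matrix (Fin r) (Fin q) ℝ,
      B = M * A ∧ ((1 : Matrix (Fin q) (Fin q) ℝ) - Mᵀ * M).PosSemidef := by
  rw [posSemidef_transpose_mul_self_sub_iff_norm_le]
  constructor
  · intro h
    obtain ⟨m, hBm, hm⟩ := LinearMap.exists_comp_eq_of_norm_le h
    refine ⟨toEuclideanLin.symm m, toEuclideanLin.injective ?_,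
      (posSemidef_one_sub_transpose_mul_self_iff_norm_le _).2 ?_⟩
    · rw [toLpLin_mul_same, LinearEquiv.apply_symm_apply, hBm]
    · simpa using hm
  · rintro ⟨M, rfl, hM⟩ x
    rw [toLpLin_mul_same]
    exact (posSemidef_one_sub_transpose_mul_self_iff_norm_le M).1 hM _
end

section
/- Let M, N ∈ ℝ^{(q+r)×(q+r)} be symmetric with M ∈ Π_{q,r}, and assume M₂₂ has at least one negative eigenvalue. Assume 𝒵_{q,r}(N) ⊆ 𝒵_{q,r}(M) and 𝒵_{q,r}(N) is nonempty. Then ker N₂₂ ⊆ ker N₁₂, i.e., for every x ∈ ℝ^r, N₂₂ x = 0 implies N₁₂ x = 0. -/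
open Matrix

/-!
Fix `Z₀ ∈ 𝒵(N)` and `x` with `N₂₂ x = 0`, and suppose `u := N₁₂ x ≠ 0`. As `N₂₂ x = 0`, the
form of `N` is affine along `(0, x)`, so for every `y` and `β` a rank-two update
`Z₀ + x wᵀ + β y uᵀ` with suitable `w` stays in `𝒵(N)`, hence in `𝒵(M)`. At `z = u` its graph
vector is `(u, Z₀ u) + a (0, x) + β |u|² (0, y)`, and a quadratic form that is nonnegative along
a ray is nonnegative in the direction of the ray. With `β = 0` this gives `xᵀ M₂₂ x ≥ 0`, so
`M₂₂ x = 0` because `M₂₂ ⪯ 0`, hence `M₁₂ x = 0` and `M (0, x) = 0`. The `(0, x)`-component then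
no longer matters, and every `y` gives `yᵀ M₂₂ y ≥ 0`, contradicting the negative eigenvalue.
-/

lemma nonneg_of_forall_nonneg_quadratic {a b c : ℝ}
    (h : ∀ t : ℝ, 0 ≤ t → 0 ≤ a + b * t + c * t ^ 2) : 0 ≤ c := by
  by_contra! hc
  set t := (|a| + |b| + 1) / -c + 1
  have ht : 1 ≤ t := le_add_of_nonneg_left (div_nonneg (by positivity) (by linarith))
  have hct : c * t = c - (|a| + |b| + 1) := by
    have : c ≠ 0 := hc.ne
    simp only [t]; field_simp; ring
  have ha : a ≤ |a| * t := (le_abs_self a).trans (le_mul_of_one_le_right (abs_nonneg a) ht)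
  have hb : b * t ≤ |b| * t := mul_le_mul_of_nonneg_right (le_abs_self b) (by linarith)
  have := h t (by linarith)
  nlinarith

namespace Matrix

variable {ι : Type*} [Fintype ι] {P : Matrix ι ι ℝ}

lemma IsSymm.dotProduct_mulVec_comm (hP : P.IsSymm) (v d : ι → ℝ) :
    v ⬝ᵥ P *ᵥ d = d ⬝ᵥ P *ᵥ v := by
  rw [dotProduct_mulVec, ← mulVec_transpose, hP.eq, dotProduct_comm]

lemma IsSymm.dotProduct_mulVec_add (hP : P.IsSymm) (v d : ι → ℝ) :
    (v + d) ⬝ᵥ P *ᵥ (v + d) = v ⬝ᵥ P *ᵥ v + 2 * (v ⬝ᵥ P *ᵥ d) + d ⬝ᵥ P *ᵥ d := by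
  simp only [mulVec_add, dotProduct_add, add_dotProduct, hP.dotProduct_mulVec_comm d v]
  ring

lemma IsSymm.dotProduct_mulVec_add_of_mulVec_eq_zero (hP : P.IsSymm) (v : ι → ℝ) {d : ι → ℝ}
    (hd : P *ᵥ d = 0) : (v + d) ⬝ᵥ P *ᵥ (v + d) = v ⬝ᵥ P *ᵥ v := by
  rw [hP.dotProduct_mulVec_add, hd, dotProduct_zero, dotProduct_zero, mul_zero, add_zero,
    add_zero]

lemma IsSymm.dotProduct_mulVec_nonneg_of_ray (hP : P.IsSymm) {v d : ι → ℝ}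
    (h : ∀ t : ℝ, 0 ≤ t → 0 ≤ (v + t • d) ⬝ᵥ P *ᵥ (v + t • d)) : 0 ≤ d ⬝ᵥ P *ᵥ d := by
  refine nonneg_of_forall_nonneg_quadratic (a := v ⬝ᵥ P *ᵥ v) (b := 2 * (v ⬝ᵥ P *ᵥ d))
    fun t ht => ?_
  have := h t ht
  simp only [hP.dotProduct_mulVec_add, mulVec_smul, dotProduct_smul, smul_dotProduct,
    smul_eq_mul] at this
  linarith

section Blocks

variable {m n : Type*} [Fintype m]

lemma mulVec_zero_sumElim [Fintype n] {α : Type*} [NonUnitalNonAssocSemiring α]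
    (P : Matrix (m ⊕ n) (m ⊕ n) α) (x : n → α) :
    P *ᵥ ((0 : m → α) ⊕ᵥ x) = P.toBlocks₁₂ *ᵥ x ⊕ᵥ P.toBlocks₂₂ *ᵥ x := by
  conv_lhs => rw [← fromBlocks_toBlocks P]
  simp [fromBlocks_mulVec]

lemma zero_sumElim_dotProduct_mulVec_zero_sumElim [Fintype n]
    (P : Matrix (m ⊕ n) (m ⊕ n) ℝ) (x y : n → ℝ) :
    ((0 : m → ℝ) ⊕ᵥ x) ⬝ᵥ P *ᵥ ((0 : m → ℝ) ⊕ᵥ y) = x ⬝ᵥ P.toBlocks₂₂ *ᵥ y := by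
  simp [mulVec_zero_sumElim, sumElim_dotProduct_sumElim]

lemma sumElim_add_vecMulVec_mulVec (Z : Matrix n m ℝ) (x : n → ℝ) (w z : m → ℝ) :
    (z ⊕ᵥ (Z + vecMulVec x w) *ᵥ z) = (z ⊕ᵥ Z *ᵥ z) + (w ⬝ᵥ z) • ((0 : m → ℝ) ⊕ᵥ x) := by
  ext (i | i) <;> simp [add_mulVec, vecMulVec_mulVec, mul_comm]

end Blocks

end Matrix

section QMI

variable {m n : Type*} [Fintype m] [Fintype n] [DecidableEq m]

/-- The set `𝒵_{q,r}(P)` of the paper. -/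
def qmiSolutionSet (P : Matrix (m ⊕ n) (m ⊕ n) ℝ) : Set (Matrix n m ℝ) :=
  {Z | ((fromRows (1 : Matrix m m ℝ) Z)ᵀ * P * fromRows (1 : Matrix m m ℝ) Z).PosSemidef}

lemma mem_qmiSolutionSet_iff {P : Matrix (m ⊕ n) (m ⊕ n) ℝ} (hP : P.IsSymm)
    {Z : Matrix n m ℝ} :
    Z ∈ qmiSolutionSet P ↔ ∀ z, 0 ≤ (z ⊕ᵥ Z *ᵥ z) ⬝ᵥ P *ᵥ (z ⊕ᵥ Z *ᵥ z) := by
  have hquad (z : m → ℝ) :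
      star z ⬝ᵥ ((fromRows (1 : Matrix m m ℝ) Z)ᵀ * P * fromRows (1 : Matrix m m ℝ) Z) *ᵥ z
        = (z ⊕ᵥ Z *ᵥ z) ⬝ᵥ P *ᵥ (z ⊕ᵥ Z *ᵥ z) := by
    rw [star_trivial, ← mulVec_mulVec, ← mulVec_mulVec, dotProduct_mulVec, vecMul_transpose,
      fromRows_mulVec, one_mulVec]
  have hsymm :
      ((fromRows (1 : Matrix m m ℝ) Z)ᵀ * P * fromRows (1 : Matrix m m ℝ) Z).IsHermitian :=
    isHermitian_conjTranspose_mul_mul _ (isHermitian_iff_isSymm.mpr hP)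
  simp only [qmiSolutionSet, Set.mem_ofPred_eq, posSemidef_iff_dotProduct_mulVec, hquad, hsymm,
    true_and]

variable {M N : Matrix (m ⊕ n) (m ⊕ n) ℝ} {Z₀ : Matrix n m ℝ} {x : n → ℝ}

/-- Along `(0, x)` the form of `N` is affine (as `N₂₂ x = 0`), and the `x`-part of the update
cancels the cross term created by its `y`-part, leaving `(2α + β² yᵀN₂₂y) (uᵀz)²` with
`u = N₁₂ x`. -/
lemma add_vecMulVec_add_vecMulVec_mem_qmiSolutionSet (hN : N.IsSymm)
    (hZ₀ : Z₀ ∈ qmiSolutionSet N) (hx : N.toBlocks₂₂ *ᵥ x = 0) (y : n → ℝ) {α β : ℝ}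
    (hαβ : 0 ≤ 2 * α + β ^ 2 * (y ⬝ᵥ N.toBlocks₂₂ *ᵥ y)) :
    Z₀ + vecMulVec x (α • (N.toBlocks₁₂ *ᵥ x)
        - β • (N.toBlocks₁₂ *ᵥ y + Z₀ᵀ *ᵥ (N.toBlocks₂₂ *ᵥ y)))
      + vecMulVec y (β • (N.toBlocks₁₂ *ᵥ x)) ∈ qmiSolutionSet N := by
  rw [mem_qmiSolutionSet_iff hN] at hZ₀ ⊢
  intro z
  rw [sumElim_add_vecMulVec_mulVec, sumElim_add_vecMulVec_mulVec, hN.dotProduct_mulVec_add,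
    hN.dotProduct_mulVec_add]
  set u := N.toBlocks₁₂ *ᵥ x
  set c := N.toBlocks₁₂ *ᵥ y + Z₀ᵀ *ᵥ (N.toBlocks₂₂ *ᵥ y)
  set v := z ⊕ᵥ Z₀ *ᵥ z
  have hNx : N *ᵥ ((0 : m → ℝ) ⊕ᵥ x) = u ⊕ᵥ 0 := by rw [mulVec_zero_sumElim, hx]
  have hvx : v ⬝ᵥ N *ᵥ ((0 : m → ℝ) ⊕ᵥ x) = u ⬝ᵥ z := by
    simp [v, hNx, sumElim_dotProduct_sumElim, dotProduct_comm]
  have hxx : ((0 : m → ℝ) ⊕ᵥ x) ⬝ᵥ N *ᵥ ((0 : m → ℝ) ⊕ᵥ x) = 0 := by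
    simp [hNx, sumElim_dotProduct_sumElim]
  have hxy : ((0 : m → ℝ) ⊕ᵥ x) ⬝ᵥ N *ᵥ ((0 : m → ℝ) ⊕ᵥ y) = 0 := by
    simp [hN.dotProduct_mulVec_comm, hNx, sumElim_dotProduct_sumElim]
  have hvy : v ⬝ᵥ N *ᵥ ((0 : m → ℝ) ⊕ᵥ y) = c ⬝ᵥ z := by
    rw [mulVec_zero_sumElim, sumElim_dotProduct_sumElim, add_dotProduct, mulVec_transpose,
      ← dotProduct_mulVec, dotProduct_comm z, dotProduct_comm (Z₀ *ᵥ z)]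
  simp only [mulVec_smul, dotProduct_smul, smul_dotProduct, add_dotProduct, sub_dotProduct,
    smul_eq_mul, hvx, hxx, hxy, hvy, zero_sumElim_dotProduct_mulVec_zero_sumElim]
  nlinarith [hZ₀ z, mul_nonneg hαβ (sq_nonneg (u ⬝ᵥ z))]

lemma dotProduct_toBlocks₂₂_mulVec_nonneg_of_subset (hM : M.IsSymm) (hN : N.IsSymm)
    (hMN : qmiSolutionSet N ⊆ qmiSolutionSet M) (hZ₀ : Z₀ ∈ qmiSolutionSet N)
    (hx : N.toBlocks₂₂ *ᵥ x = 0) (hu : N.toBlocks₁₂ *ᵥ x ≠ 0) :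
    0 ≤ x ⬝ᵥ M.toBlocks₂₂ *ᵥ x := by
  set u := N.toBlocks₁₂ *ᵥ x with hu_def
  have huu : 0 < u ⬝ᵥ u := by simpa using dotProduct_self_star_pos_iff.mpr hu
  rw [← zero_sumElim_dotProduct_mulVec_zero_sumElim (m := m)]
  refine hM.dotProduct_mulVec_nonneg_of_ray (v := u ⊕ᵥ Z₀ *ᵥ u) fun t ht => ?_
  have hZ := hMN (add_vecMulVec_add_vecMulVec_mem_qmiSolutionSet hN hZ₀ hx x
    (α := t / (u ⬝ᵥ u)) (β := 0) (by simpa using div_nonneg ht huu.le))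
  have := (mem_qmiSolutionSet_iff hM).1 hZ u
  simpa only [← hu_def, sumElim_add_vecMulVec_mulVec, zero_smul, sub_zero, zero_dotProduct,
    add_zero, smul_dotProduct, smul_eq_mul, div_mul_cancel₀ t huu.ne'] using this

lemma forall_dotProduct_toBlocks₂₂_mulVec_nonneg_of_subset (hM : M.IsSymm) (hN : N.IsSymm)
    (hMN : qmiSolutionSet N ⊆ qmiSolutionSet M) (hZ₀ : Z₀ ∈ qmiSolutionSet N)
    (hx : N.toBlocks₂₂ *ᵥ x = 0) (hu : N.toBlocks₁₂ *ᵥ x ≠ 0)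
    (hMx : M *ᵥ ((0 : m → ℝ) ⊕ᵥ x) = 0) :
    ∀ y, 0 ≤ y ⬝ᵥ M.toBlocks₂₂ *ᵥ y := by
  intro y
  set u := N.toBlocks₁₂ *ᵥ x with hu_def
  have huu : 0 < u ⬝ᵥ u := by simpa using dotProduct_self_star_pos_iff.mpr hu
  rw [← zero_sumElim_dotProduct_mulVec_zero_sumElim (m := m)]
  refine hM.dotProduct_mulVec_nonneg_of_ray (v := u ⊕ᵥ Z₀ *ᵥ u) fun t ht => ?_
  set β := t / (u ⬝ᵥ u)
  set ny := y ⬝ᵥ N.toBlocks₂₂ *ᵥ y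
  have hαβ : 0 ≤ 2 * (β ^ 2 * |ny| / 2) + β ^ 2 * ny := by
    nlinarith [neg_abs_le ny, sq_nonneg β]
  have hZ := hMN (add_vecMulVec_add_vecMulVec_mem_qmiSolutionSet hN hZ₀ hx y hαβ)
  have := (mem_qmiSolutionSet_iff hM).1 hZ u
  rwa [← hu_def, sumElim_add_vecMulVec_mulVec, sumElim_add_vecMulVec_mulVec, add_right_comm,
    hM.dotProduct_mulVec_add_of_mulVec_eq_zero _ (by rw [mulVec_smul, hMx, smul_zero]),
    smul_dotProduct, smul_eq_mul, div_mul_cancel₀ t huu.ne'] at this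

end QMI

theorem kerN22_subset_kerN12_general (q r : ℕ)
    (M N : Matrix (Fin q ⊕ Fin r) (Fin q ⊕ Fin r) ℝ)
    (hM : M.IsSymm) (hN : N.IsSymm)
    -- M ∈ Π_{q,r}:
    (hM22 : (-(M.toBlocks₂₂)).PosSemidef)
    (hMker : ∀ x : Fin r → ℝ, M.toBlocks₂₂ *ᵥ x = 0 → M.toBlocks₁₂ *ᵥ x = 0)
    (hIncl : ∀ Z : Matrix (Fin r) (Fin q) ℝ,
      ((fromRows (1 : Matrix (Fin q) (Fin q) ℝ) Z)ᵀ * N * fromRows 1 Z).PosSemidef →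
      ((fromRows (1 : Matrix (Fin q) (Fin q) ℝ) Z)ᵀ * M * fromRows 1 Z).PosSemidef)
    (hNonempty : ∃ Z : Matrix (Fin r) (Fin q) ℝ,
      ((fromRows (1 : Matrix (Fin q) (Fin q) ℝ) Z)ᵀ * N * fromRows 1 Z).PosSemidef)
    -- M₂₂ has at least one negative eigenvalue:
    (hNegEig : ∃ x : Fin r → ℝ, x ⬝ᵥ M.toBlocks₂₂ *ᵥ x < 0) :
    ∀ x : Fin r → ℝ, N.toBlocks₂₂ *ᵥ x = 0 → N.toBlocks₁₂ *ᵥ x = 0 := by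
  intro x hx
  by_contra hu
  obtain ⟨Z₀, hZ₀⟩ := hNonempty
  obtain ⟨y, hy⟩ := hNegEig
  have hMN : qmiSolutionSet N ⊆ qmiSolutionSet M := hIncl
  have hxMx : x ⬝ᵥ M.toBlocks₂₂ *ᵥ x = 0 :=
    le_antisymm (by simpa [neg_mulVec] using hM22.dotProduct_mulVec_nonneg x)
      (dotProduct_toBlocks₂₂_mulVec_nonneg_of_subset hM hN hMN hZ₀ hx hu)
  have hM22x : M.toBlocks₂₂ *ᵥ x = 0 := by
    simpa [neg_mulVec] using (hM22.dotProduct_mulVec_zero_iff x).mp (by simp [neg_mulVec, hxMx])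
  have hMx : M *ᵥ ((0 : Fin q → ℝ) ⊕ᵥ x) = 0 := by
    rw [mulVec_zero_sumElim, hMker x hM22x, hM22x, Sum.elim_zero_zero]
  exact hy.not_ge (forall_dotProduct_toBlocks₂₂_mulVec_nonneg_of_subset hM hN hMN hZ₀ hx hu hMx y)

/-- Step 3 of Lemma 3: ker N₂₂ ⊆ ker N₁₂. -/
theorem kerN22_subset_kerN12 (q r : ℕ)
    (M N : Matrix (Fin q ⊕ Fin r) (Fin q ⊕ Fin r) ℝ)
    (hM : M.IsSymm) (hN : N.IsSymm)
    -- M ∈ Π_{q,r}: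
    (M22d : Matrix (Fin r) (Fin r) ℝ)
    (hMMP : IsMoorePenroseInv M.toBlocks₂₂ M22d)
    (hM22 : (-(M.toBlocks₂₂)).PosSemidef)
    (hMker : ∀ x : Fin r → ℝ, M.toBlocks₂₂ *ᵥ x = 0 → M.toBlocks₁₂ *ᵥ x = 0)
    (hMSchur : (M.toBlocks₁₁ - M.toBlocks₁₂ * M22d * M.toBlocks₂₁).PosSemidef)
    (hIncl : ∀ Z : Matrix (Fin r) (Fin q) ℝ,
      ((fromRows (1 : Matrix (Fin q) (Fin q) ℝ) Z)ᵀ * N * fromRows 1 Z).PosSemidef →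
      ((fromRows (1 : Matrix (Fin q) (Fin q) ℝ) Z)ᵀ * M * fromRows 1 Z).PosSemidef)
    (hNonempty : ∃ Z : Matrix (Fin r) (Fin q) ℝ,
      ((fromRows (1 : Matrix (Fin q) (Fin q) ℝ) Z)ᵀ * N * fromRows 1 Z).PosSemidef)
    -- M₂₂ has at least one negative eigenvalue:
    (hNegEig : ∃ x : Fin r → ℝ, x ⬝ᵥ M.toBlocks₂₂ *ᵥ x < 0) :
    ∀ x : Fin r → ℝ, N.toBlocks₂₂ *ᵥ x = 0 → N.toBlocks₁₂ *ᵥ x = 0 :=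
  kerN22_subset_kerN12_general q r M N hM hN hM22 hMker hIncl hNonempty hNegEig
end

section
/- Let Φ̂ ∈ Π_{p,T} with blocks Φ̂₁₁ ∈ ℝ^{p×p}, Φ̂₁₂ ∈ ℝ^{p×T}, Φ̂₂₂ ∈ ℝ^{T×T}. Let Q̂ ∈ ℝ^{p×p} and R ∈ ℝ^{T×T} be matrices with Q̂ Q̂ᵀ = Φ̂₁₁ − Φ̂₁₂ Φ̂₂₂† Φ̂₂₁ and R Rᵀ = −Φ̂₂₂, and let Δ̂_c := −Φ̂₁₂ Φ̂₂₂† ∈ ℝ^{p×T}. Then for Δ̂ ∈ ℝ^{p×T}, the QMI [I_p; Δ̂ᵀ]ᵀ Φ̂ [I_p; Δ̂ᵀ] ⪰ 0 holds if and only if there exists M₁ ∈ ℝ^{p×T} such that (Δ̂ − Δ̂_c) R = Q̂ M₁ and M₁ M₁ᵀ ⪯ I_p. -/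
/-! Since `Φ̂₂₂ Φ̂₂₂† Φ̂₂₂ = Φ̂₂₂` and `ker Φ̂₂₂ ⊆ ker Φ̂₁₂`, also `Φ̂₁₂ Φ̂₂₂† Φ̂₂₂ = Φ̂₁₂`, and
completing the square turns the QMI into `Q̂Q̂ᵀ - BBᵀ ⪰ 0` with `B = (Δ̂ - Δ̂_c) R`. That this holds
iff `B = Q̂ M₁` for a contraction `M₁` is Douglas' factorization lemma. For its nontrivial direction
take `M₁ = G B`, where `G` is an inner inverse of `Q̂` for which `Q̂ G` and `G Q̂` are orthogonal
projections: `ker Q̂ᵀ ⊆ ker Bᵀ` gives `Q̂ G B = B`, and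
`I - M₁ M₁ᵀ = (I - G Q̂) + G (Q̂Q̂ᵀ - BBᵀ) Gᵀ ⪰ 0`. -/

open Matrix

namespace Matrix

variable {m n k : Type*}

theorem IsHermitian.exists_isSymm_commute_inner_inverse [Fintype n] [DecidableEq n]
    {S : Matrix n n ℝ} (hS : S.IsHermitian) :
    ∃ D : Matrix n n ℝ, D.IsSymm ∧ Commute S D ∧ S * D * S = S := by
  -- as `0⁻¹ = 0`, `D` inverts `S` on its range and vanishes on its kernel
  have hcont : ContinuousOn (·⁻¹ : ℝ → ℝ) (spectrum ℝ S) := finite_real_spectrum.continuousOn _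
  refine ⟨cfc (·⁻¹ : ℝ → ℝ) S, IsSelfAdjoint.isHermitian (cfc_predicate _ S),
    (Commute.cfc_real rfl _).symm, ?_⟩
  calc S * cfc (·⁻¹ : ℝ → ℝ) S * S = cfc (fun x : ℝ => x * x⁻¹ * x) S := by
        rw [cfc_mul _ _ S, cfc_mul _ _ S, cfc_id' ℝ S]
    _ = S := by
        rw [cfc_congr fun x _ => mul_inv_mul_cancel x]
        exact cfc_id' ℝ S

theorem exists_inner_inverse_with_symm_projections [Fintype n] [Fintype k]
    (Q : Matrix n k ℝ) :
    ∃ G : Matrix k n ℝ, Q * G * Q = Q ∧ (Q * G).IsSymm ∧ (G * Q).IsSymm := by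
  classical
  have hS : (Q * Qᵀ).IsHermitian := by
    simpa only [conjTranspose_eq_transpose_of_trivial] using isHermitian_mul_conjTranspose_self Q
  obtain ⟨D, hD, hcomm, hinner⟩ := hS.exists_isSymm_commute_inner_inverse
  have hQ : Q * Qᵀ * D * Q = Q := by
    -- `(1 - S D) S = 0` for `S = Q Qᵀ`
    have hE : ((1 - Q * Qᵀ * D) * Q) * ((1 - Q * Qᵀ * D) * Q)ᴴ = 0 := by
      rw [conjTranspose_eq_transpose_of_trivial, transpose_mul, Matrix.mul_assoc,
        ← Matrix.mul_assoc Q, ← Matrix.mul_assoc, sub_mul, one_mul, hinner, sub_self, zero_mul]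
    have := self_mul_conjTranspose_eq_zero.mp hE
    rw [Matrix.sub_mul, Matrix.one_mul, sub_eq_zero] at this
    exact this.symm
  refine ⟨Qᵀ * D, by rwa [← Matrix.mul_assoc], ?_, ?_⟩
  · rw [IsSymm, ← Matrix.mul_assoc, transpose_mul, hD.eq, transpose_mul, transpose_transpose]
    exact hcomm.eq.symm
  · rw [IsSymm, transpose_mul, transpose_mul, transpose_transpose, hD.eq, Matrix.mul_assoc]

theorem mul_eq_of_ker_mulVec_le {α : Type*} [Ring α] [Fintype n] {A : Matrix m n α}
    {B : Matrix k n α} {X : Matrix n n α} (hker : ∀ x, A *ᵥ x = 0 → B *ᵥ x = 0) (hAX : A * X = A) :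
    B * X = B := by
  refine ext_iff_mulVec.mpr fun v => ?_
  have hAv : A *ᵥ (X *ᵥ v - v) = 0 := by rw [mulVec_sub, mulVec_mulVec, hAX, sub_self]
  simpa only [mulVec_sub, mulVec_mulVec, sub_eq_zero] using hker _ hAv

theorem dotProduct_mul_transpose_mulVec {α : Type*} [CommSemiring α] [Fintype n] [Fintype k]
    (A : Matrix n k α) (x : n → α) : x ⬝ᵥ (A * Aᵀ) *ᵥ x = (Aᵀ *ᵥ x) ⬝ᵥ (Aᵀ *ᵥ x) := by
  rw [← mulVec_mulVec, dotProduct_mulVec, ← mulVec_transpose]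

theorem mulVec_transpose_eq_zero_of_posSemidef_sub [Fintype m] [Fintype n] [Fintype k]
    {Q : Matrix n k ℝ} {B : Matrix n m ℝ}
    (h : (Q * Qᵀ - B * Bᵀ).PosSemidef) {x : n → ℝ} (hx : Qᵀ *ᵥ x = 0) : Bᵀ *ᵥ x = 0 := by
  have hquad : star x ⬝ᵥ (Q * Qᵀ - B * Bᵀ) *ᵥ x = -((Bᵀ *ᵥ x) ⬝ᵥ (Bᵀ *ᵥ x)) := by
    rw [star_trivial, sub_mulVec, dotProduct_sub, dotProduct_mul_transpose_mulVec,
      dotProduct_mul_transpose_mulVec, hx, zero_dotProduct, zero_sub]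
  have hnonpos : (Bᵀ *ᵥ x) ⬝ᵥ (Bᵀ *ᵥ x) ≤ 0 := by
    simpa only [hquad, neg_nonneg] using h.dotProduct_mulVec_nonneg x
  have hnonneg : 0 ≤ (Bᵀ *ᵥ x) ⬝ᵥ (Bᵀ *ᵥ x) := by
    simpa only [star_trivial] using dotProduct_star_self_nonneg (Bᵀ *ᵥ x)
  exact dotProduct_self_eq_zero.mp (hnonpos.antisymm hnonneg)

theorem posSemidef_mul_transpose_sub_iff_exists_contraction [Fintype m] [Fintype n] [Fintype k]
    [DecidableEq k] (Q : Matrix n k ℝ) (B : Matrix n m ℝ) :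
    (Q * Qᵀ - B * Bᵀ).PosSemidef ↔
      ∃ M : Matrix k m ℝ, B = Q * M ∧ ((1 : Matrix k k ℝ) - M * Mᵀ).PosSemidef := by
  constructor
  · intro h
    obtain ⟨G, hQGQ, hQG, hGQ⟩ := exists_inner_inverse_with_symm_projections Q
    have hBQG : Bᵀ * (Q * G) = Bᵀ := by
      refine mul_eq_of_ker_mulVec_le (fun x => mulVec_transpose_eq_zero_of_posSemidef_sub h) ?_
      rw [← hQG.eq, ← transpose_mul, hQGQ]
    have hB : B = Q * (G * B) := by
      have := congrArg transpose hBQG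
      rw [transpose_mul, transpose_transpose, hQG.eq] at this
      rw [← Matrix.mul_assoc, this]
    refine ⟨G * B, hB, ?_⟩
    have hidem : G * Q * (G * Q) = G * Q := by
      rw [← Matrix.mul_assoc, Matrix.mul_assoc G Q G, Matrix.mul_assoc G, hQGQ]
    have hproj : (1 - G * Q).PosSemidef := by
      have hsq : 1 - G * Q = (1 - G * Q) * (1 - G * Q)ᴴ := by
        rw [conjTranspose_eq_transpose_of_trivial, transpose_sub, transpose_one, hGQ.eq,
          Matrix.mul_sub, Matrix.mul_one, Matrix.sub_mul, Matrix.one_mul, hidem, sub_self,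
          sub_zero]
      rw [hsq]
      exact posSemidef_self_mul_conjTranspose _
    have hQQ : G * (Q * Qᵀ) * Gᵀ = G * Q := by
      rw [Matrix.mul_assoc, Matrix.mul_assoc, ← transpose_mul, ← Matrix.mul_assoc, hGQ.eq, hidem]
    have hsplit : 1 - G * B * (G * B)ᵀ = (1 - G * Q) + G * (Q * Qᵀ - B * Bᵀ) * Gᴴ := by
      rw [conjTranspose_eq_transpose_of_trivial, Matrix.mul_sub, Matrix.sub_mul, hQQ,
        transpose_mul, Matrix.mul_assoc G B, ← Matrix.mul_assoc B, Matrix.mul_assoc G (B * Bᵀ)]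
      abel
    rw [hsplit]
    exact hproj.add (h.mul_mul_conjTranspose_same G)
  · rintro ⟨M, rfl, hM⟩
    have hsplit : Q * Qᵀ - Q * M * (Q * M)ᵀ = Q * (1 - M * Mᵀ) * Qᴴ := by
      rw [conjTranspose_eq_transpose_of_trivial, transpose_mul, Matrix.mul_sub, Matrix.sub_mul,
        Matrix.mul_one, Matrix.mul_assoc, Matrix.mul_assoc, Matrix.mul_assoc]
    rw [hsplit]
    exact hM.mul_mul_conjTranspose_same Q

theorem transpose_fromRows_one_mul_mul_fromRows_one {α : Type*} [CommRing α] [Fintype m]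
    [Fintype n] [DecidableEq m] {Φ : Matrix (m ⊕ n) (m ⊕ n) α} (hΦ : Φ.IsSymm)
    {X : Matrix n n α} (hX : Φ.toBlocks₁₂ * (X * Φ.toBlocks₂₂) = Φ.toBlocks₁₂) (Δ : Matrix m n α) :
    (fromRows (1 : Matrix m m α) Δᵀ)ᵀ * Φ * fromRows (1 : Matrix m m α) Δᵀ =
      Φ.toBlocks₁₁ - Φ.toBlocks₁₂ * X * Φ.toBlocks₂₁ +
        (Δ + Φ.toBlocks₁₂ * X) * Φ.toBlocks₂₂ * (Δ + Φ.toBlocks₁₂ * X)ᵀ := by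
  obtain ⟨-, h21, -, h22⟩ := isSymm_fromBlocks_iff.mp (by rwa [fromBlocks_toBlocks] :
    (fromBlocks Φ.toBlocks₁₁ Φ.toBlocks₁₂ Φ.toBlocks₂₁ Φ.toBlocks₂₂).IsSymm)
  conv_lhs => rw [← fromBlocks_toBlocks Φ]
  rw [← h21]
  set B := Φ.toBlocks₁₂
  set D := Φ.toBlocks₂₂
  have hXD : D * (Xᵀ * Bᵀ) = Bᵀ := by
    simpa only [transpose_mul, h22.eq, Matrix.mul_assoc] using congrArg transpose hX
  have hsq :
      (Δ + B * X) * D * (Δ + B * X)ᵀ = Δ * D * Δᵀ + Δ * Bᵀ + B * Δᵀ + B * X * Bᵀ := by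
    simp only [transpose_add, transpose_mul, Matrix.add_mul, Matrix.mul_add, Matrix.mul_assoc]
    rw [hXD, ← Matrix.mul_assoc X D, ← Matrix.mul_assoc B (X * D), hX]
    abel
  rw [hsq, transpose_fromRows, transpose_one, transpose_transpose, fromCols_mul_fromBlocks,
    fromCols_mul_fromRows, Matrix.one_mul, Matrix.one_mul, Matrix.mul_one, Matrix.add_mul]
  abel

end Matrix

theorem noise_qmi_parametrization_general (p T : ℕ)
    (Φ : Matrix (Fin p ⊕ Fin T) (Fin p ⊕ Fin T) ℝ)
    (hΦ : Φ.IsSymm)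
    (Φ22d : Matrix (Fin T) (Fin T) ℝ)
    (hMP : IsMoorePenroseInv Φ.toBlocks₂₂ Φ22d)
    -- Φ̂ ∈ Π_{p,T}:
    (hΦker : ∀ x : Fin T → ℝ, Φ.toBlocks₂₂ *ᵥ x = 0 → Φ.toBlocks₁₂ *ᵥ x = 0)
    (Q : Matrix (Fin p) (Fin p) ℝ)
    (hQ : Q * Qᵀ = Φ.toBlocks₁₁ - Φ.toBlocks₁₂ * Φ22d * Φ.toBlocks₂₁)
    (R : Matrix (Fin T) (Fin T) ℝ)
    (hR : R * Rᵀ = -(Φ.toBlocks₂₂)) :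
    ∀ Δ : Matrix (Fin p) (Fin T) ℝ,
      ((fromRows (1 : Matrix (Fin p) (Fin p) ℝ) Δᵀ)ᵀ * Φ * fromRows (1 : Matrix (Fin p) (Fin p) ℝ) Δᵀ).PosSemidef ↔
      ∃ M₁ : Matrix (Fin p) (Fin T) ℝ,
        (Δ - (-(Φ.toBlocks₁₂ * Φ22d))) * R = Q * M₁ ∧
        ((1 : Matrix (Fin p) (Fin p) ℝ) - M₁ * M₁ᵀ).PosSemidef := by
  intro Δ
  have hX : Φ.toBlocks₁₂ * (Φ22d * Φ.toBlocks₂₂) = Φ.toBlocks₁₂ :=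
    mul_eq_of_ker_mulVec_le hΦker (by rw [← Matrix.mul_assoc, hMP.1])
  set E := Δ + Φ.toBlocks₁₂ * Φ22d
  have hER : E * R * (E * R)ᵀ = -(E * Φ.toBlocks₂₂ * Eᵀ) := by
    rw [transpose_mul, ← Matrix.mul_assoc, Matrix.mul_assoc E R, hR, Matrix.mul_neg,
      Matrix.neg_mul]
  rw [transpose_fromRows_one_mul_mul_fromRows_one hΦ hX, ← hQ, sub_neg_eq_add,
    ← neg_neg (_ * _ * Eᵀ), ← hER, ← sub_eq_add_neg]
  exact posSemidef_mul_transpose_sub_iff_exists_contraction Q _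

/-- Parametrization of the noise QMI: `[I; Δ̂ᵀ]ᵀ Φ̂ [I; Δ̂ᵀ] ⪰ 0` iff
`(Δ̂ − Δ̂_c) R = Q̂ M₁` for some contraction `M₁`. -/
theorem noise_qmi_parametrization (p T : ℕ)
    (Φ : Matrix (Fin p ⊕ Fin T) (Fin p ⊕ Fin T) ℝ)
    (hΦ : Φ.IsSymm)
    (Φ22d : Matrix (Fin T) (Fin T) ℝ)
    (hMP : IsMoorePenroseInv Φ.toBlocks₂₂ Φ22d)
    -- Φ̂ ∈ Π_{p,T}:
    (hΦ22 : (-(Φ.toBlocks₂₂)).PosSemidef)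
    (hΦker : ∀ x : Fin T → ℝ, Φ.toBlocks₂₂ *ᵥ x = 0 → Φ.toBlocks₁₂ *ᵥ x = 0)
    (hΦSchur : (Φ.toBlocks₁₁ - Φ.toBlocks₁₂ * Φ22d * Φ.toBlocks₂₁).PosSemidef)
    (Q : Matrix (Fin p) (Fin p) ℝ)
    (hQ : Q * Qᵀ = Φ.toBlocks₁₁ - Φ.toBlocks₁₂ * Φ22d * Φ.toBlocks₂₁)
    (R : Matrix (Fin T) (Fin T) ℝ)
    (hR : R * Rᵀ = -(Φ.toBlocks₂₂)) :
    ∀ Δ : Matrix (Fin p) (Fin T) ℝ,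
      ((fromRows (1 : Matrix (Fin p) (Fin p) ℝ) Δᵀ)ᵀ * Φ * fromRows (1 : Matrix (Fin p) (Fin p) ℝ) Δᵀ).PosSemidef ↔
      ∃ M₁ : Matrix (Fin p) (Fin T) ℝ,
        (Δ - (-(Φ.toBlocks₁₂ * Φ22d))) * R = Q * M₁ ∧
        ((1 : Matrix (Fin p) (Fin p) ℝ) - M₁ * M₁ᵀ).PosSemidef :=
  noise_qmi_parametrization_general p T Φ hΦ Φ22d hMP hΦker Q hQ R hR
end

section
/- Let Φ̂ ∈ Π_{p,T}, let Q̂ ∈ ℝ^{p×p} and R ∈ ℝ^{T×T} satisfy Q̂ Q̂ᵀ = Φ̂₁₁ − Φ̂₁₂ Φ̂₂₂† Φ̂₂₁ and R Rᵀ = −Φ̂₂₂, and set Δ̂_c := −Φ̂₁₂ Φ̂₂₂†, Q := E Q̂ ∈ ℝ^{(2n+m)×p}, and Δ_c := E Δ̂_c ∈ ℝ^{(2n+m)×T}. For (A,B) ∈ ℝ^{n×n} × ℝ^{n×m} with S := [I_n, A, B], the inequality S [E, 𝐗] Φ̂ [E, 𝐗]ᵀ Sᵀ ⪰ 0 holds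 if and only if there exists M₂ ∈ ℝ^{p×T} such that S(𝐗 − Δ_c) R = S Q M₂ and M₂ M₂ᵀ ⪯ I_p. -/
/-!
Writing `W := Φ̂₁₂ Φ̂₂₂†`, the kernel condition gives `W Φ̂₂₂ = Φ̂₁₂`, and completing the square
turns `[E, 𝐗] Φ̂ [E, 𝐗]ᵀ` into `Q Qᵀ − ((𝐗 − Δ_c) R)((𝐗 − Δ_c) R)ᵀ`. After multiplying by `S`, the
inequality reads `G Gᵀ ⪰ H Hᵀ` with `G = S Q`, `H = S (𝐗 − Δ_c) R`, and Douglas' lemma says this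
holds iff `H = G M₂` for a contraction `M₂`.
-/

open Matrix

open scoped MatrixOrder

namespace Matrix

variable {k m n p q t : Type*} [Fintype m] [Fintype n] [Fintype p] [Fintype q] [Fintype t]

theorem isSelfAdjoint_iff_isSymm {α : Type*} [Star α] [TrivialStar α] {A : Matrix k k α} :
    IsSelfAdjoint A ↔ A.IsSymm := by
  rw [IsSelfAdjoint, star_eq_conjTranspose, conjTranspose_eq_transpose_of_trivial]
  rfl

theorem mul_mul_eq_of_ker_le {R : Type*} [Ring R] {A : Matrix m n R} {Ad : Matrix n m R}
    {C : Matrix k n R} (hA : A * Ad * A = A) (hker : ∀ x, A *ᵥ x = 0 → C *ᵥ x = 0) :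
    C * Ad * A = C := by
  refine ext_iff_mulVec.2 fun v ↦ ?_
  have hv : A *ᵥ (v - (Ad * A) *ᵥ v) = 0 := by
    rw [mulVec_sub, mulVec_mulVec, ← Matrix.mul_assoc, hA, sub_self]
  have hCv := hker _ hv
  rw [mulVec_sub, mulVec_mulVec, sub_eq_zero] at hCv
  rw [hCv, Matrix.mul_assoc]

/-- The generalized inverse is `f(P)` for `f x = x⁻¹`, which inverts the nonzero eigenvalues
and keeps the zero ones (`0⁻¹ = 0`). -/
theorem IsSymm.exists_isSymm_reflexive_inverse [DecidableEq n] {P : Matrix n n ℝ}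
    (hP : P.IsSymm) : ∃ K : Matrix n n ℝ, K.IsSymm ∧ P * K * P = P ∧ K * P * K = K := by
  have hPsa : IsSelfAdjoint P := isSelfAdjoint_iff_isSymm.2 hP
  have hcont (f : ℝ → ℝ) : ContinuousOn f (spectrum ℝ P) := finite_real_spectrum.continuousOn f
  have hcfc (f g : ℝ → ℝ) : cfc f P * cfc g P = cfc (fun x ↦ f x * g x) P :=
    (cfc_mul f g P (hcont f) (hcont g)).symm
  refine ⟨cfc (·⁻¹ : ℝ → ℝ) P, isSelfAdjoint_iff_isSymm.1 IsSelfAdjoint.cfc, ?_, ?_⟩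
  · calc P * cfc (·⁻¹) P * P = cfc (fun x : ℝ ↦ x * x⁻¹ * x) P := by
          rw [← hcfc, ← hcfc, cfc_id' ℝ P]
      _ = P := by simp only [mul_inv_mul_cancel, cfc_id' ℝ P]
  · calc cfc (·⁻¹) P * P * cfc (·⁻¹) P = cfc (fun x : ℝ ↦ x⁻¹ * x * x⁻¹) P := by
          rw [← hcfc, ← hcfc, cfc_id' ℝ P]
      _ = cfc (·⁻¹) P := by
          congr 1; funext x; simpa only [inv_inv] using mul_inv_mul_cancel x⁻¹

theorem PosSemidef.transpose_mulVec_eq_zero {P : Matrix q q ℝ} {H : Matrix q t ℝ}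
    (h : (P - H * Hᵀ).PosSemidef) {x : q → ℝ} (hx : P *ᵥ x = 0) : Hᵀ *ᵥ x = 0 := by
  have h0 := h.dotProduct_mulVec_nonneg x
  rw [star_trivial, sub_mulVec, dotProduct_sub, hx, dotProduct_zero, ← mulVec_mulVec,
    dotProduct_mulVec, ← mulVec_transpose, zero_sub, neg_nonneg] at h0
  exact dotProduct_self_eq_zero.1 (le_antisymm h0 (dotProduct_self_star_nonneg _))

/-- Douglas' lemma. A witness is `M = Gᵀ (G Gᵀ)⁻ H` for a symmetric reflexive generalized
inverse `(G Gᵀ)⁻`; then `Gᵀ (G Gᵀ)⁻ G` is an orthogonal projection dominating `M Mᵀ`. -/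
theorem posSemidef_mul_transpose_sub_iff_exists_contraction_s17 [DecidableEq p] [DecidableEq q]
    (G : Matrix q p ℝ) (H : Matrix q t ℝ) :
    (G * Gᵀ - H * Hᵀ).PosSemidef ↔
      ∃ M : Matrix p t ℝ, H = G * M ∧ ((1 : Matrix p p ℝ) - M * Mᵀ).PosSemidef := by
  constructor
  · intro h
    have hP : (G * Gᵀ).IsSymm := by rw [IsSymm, transpose_mul, transpose_transpose]
    obtain ⟨K, hK, hPKP, hKPK⟩ := hP.exists_isSymm_reflexive_inverse
    have hHt : Hᵀ * K * (G * Gᵀ) = Hᵀ :=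
      mul_mul_eq_of_ker_le hPKP fun _ hx ↦ h.transpose_mulVec_eq_zero hx
    have hGM : G * (Gᵀ * K * H) = H := by
      simpa only [transpose_mul, transpose_transpose, hK.eq, Matrix.mul_assoc]
        using congrArg transpose hHt
    refine ⟨Gᵀ * K * H, hGM.symm, ?_⟩
    have hJ : IsStarProjection (Gᵀ * K * G) := by
      refine ⟨?_, isSelfAdjoint_iff_isSymm.2 ?_⟩
      · change Gᵀ * K * G * (Gᵀ * K * G) = Gᵀ * K * G
        conv_rhs => rw [← hKPK]
        simp only [Matrix.mul_assoc]
      · rw [IsSymm, transpose_mul, transpose_mul, transpose_transpose, hK.eq, Matrix.mul_assoc]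
    have hJM : (Gᵀ * K * G - (Gᵀ * K * H) * (Gᵀ * K * H)ᵀ).PosSemidef := by
      convert h.mul_mul_conjTranspose_same (Gᵀ * K) using 1
      rw [conjTranspose_eq_transpose_of_trivial, Matrix.mul_sub, Matrix.sub_mul]
      congr 1
      · conv_lhs => rw [← hKPK]
        simp only [transpose_mul, transpose_transpose, hK.eq, Matrix.mul_assoc]
      · simp only [transpose_mul, transpose_transpose, hK.eq, Matrix.mul_assoc]
    simpa only [sub_add_sub_cancel] using hJ.one_sub.nonneg.posSemidef.add hJM
  · rintro ⟨M, rfl, hM⟩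
    convert hM.mul_mul_conjTranspose_same G using 1
    simp only [conjTranspose_eq_transpose_of_trivial, transpose_mul, Matrix.mul_sub,
      Matrix.sub_mul, Matrix.mul_one, Matrix.mul_assoc]

theorem fromCols_mul_mul_transpose_fromCols {R N : Type*} [CommRing R]
    (E : Matrix N p R) (X : Matrix N t R) {Φ : Matrix (p ⊕ t) (p ⊕ t) R} (hΦ : Φ.IsSymm)
    {W : Matrix p t R} (hW : W * Φ.toBlocks₂₂ = Φ.toBlocks₁₂) :
    fromCols E X * Φ * (fromCols E X)ᵀ =
      E * (Φ.toBlocks₁₁ - W * Φ.toBlocks₂₁) * Eᵀ + (X + E * W) * Φ.toBlocks₂₂ * (X + E * W)ᵀ := by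
  obtain ⟨-, h12, -, h22⟩ := isSymm_fromBlocks_iff.1 ((fromBlocks_toBlocks Φ).symm ▸ hΦ)
  have hW' (Y : Matrix t N R) : W * (Φ.toBlocks₂₂ * Y) = Φ.toBlocks₁₂ * Y := by
    rw [← Matrix.mul_assoc, hW]
  have hWt (Y : Matrix p N R) : Φ.toBlocks₂₂ * (Wᵀ * Y) = Φ.toBlocks₂₁ * Y := by
    rw [← Matrix.mul_assoc, ← h12, ← hW, transpose_mul, h22.eq]
  conv_lhs => rw [← fromBlocks_toBlocks Φ]
  rw [transpose_fromCols, fromCols_mul_fromBlocks, fromCols_mul_fromRows]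
  simp only [Matrix.add_mul, Matrix.mul_add, Matrix.sub_mul, Matrix.mul_sub, transpose_add,
    transpose_mul, Matrix.mul_assoc, hW', hWt]
  abel

end Matrix

theorem system_qmi_parametrization_general (n m p T : ℕ)
    (Xp Xm : Matrix (Fin n) (Fin T) ℝ) (Um : Matrix (Fin m) (Fin T) ℝ)
    (E : Matrix (Fin n ⊕ (Fin n ⊕ Fin m)) (Fin p) ℝ)
    (Φ : Matrix (Fin p ⊕ Fin T) (Fin p ⊕ Fin T) ℝ) (hΦ : Φ.IsSymm)
    -- Φ̂ ∈ Π_{p,T}: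
    (Φ22d : Matrix (Fin T) (Fin T) ℝ)
    (hΦMP : IsMoorePenroseInv Φ.toBlocks₂₂ Φ22d)
    (hΦker : ∀ x : Fin T → ℝ, Φ.toBlocks₂₂ *ᵥ x = 0 → Φ.toBlocks₁₂ *ᵥ x = 0)
    (Qh : Matrix (Fin p) (Fin p) ℝ)
    (hQh : Qh * Qhᵀ = Φ.toBlocks₁₁ - Φ.toBlocks₁₂ * Φ22d * Φ.toBlocks₂₁)
    (R : Matrix (Fin T) (Fin T) ℝ)
    (hR : R * Rᵀ = -(Φ.toBlocks₂₂))
    (A : Matrix (Fin n) (Fin n) ℝ) (B : Matrix (Fin n) (Fin m) ℝ) :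
    (rowS A B *
        (fromCols E (dataX Xp Xm Um) * Φ * (fromCols E (dataX Xp Xm Um))ᵀ) *
        (rowS A B)ᵀ).PosSemidef ↔
    ∃ M₂ : Matrix (Fin p) (Fin T) ℝ,
      rowS A B * (dataX Xp Xm Um - E * (-(Φ.toBlocks₁₂ * Φ22d))) * R =
        rowS A B * (E * Qh) * M₂ ∧
      ((1 : Matrix (Fin p) (Fin p) ℝ) - M₂ * M₂ᵀ).PosSemidef := by
  set S := rowS A B
  set X := dataX Xp Xm Um
  set W := Φ.toBlocks₁₂ * Φ22d
  have hW : W * Φ.toBlocks₂₂ = Φ.toBlocks₁₂ := mul_mul_eq_of_ker_le hΦMP.1 hΦker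
  have hΦ22 : Φ.toBlocks₂₂ = -(R * Rᵀ) := by rw [hR, neg_neg]
  have hsquare : fromCols E X * Φ * (fromCols E X)ᵀ =
      (E * Qh) * (E * Qh)ᵀ - ((X - E * -W) * R) * ((X - E * -W) * R)ᵀ := by
    rw [fromCols_mul_mul_transpose_fromCols E X hΦ hW, ← hQh, Matrix.mul_neg, sub_neg_eq_add, hΦ22]
    simp only [transpose_mul, Matrix.mul_assoc, Matrix.mul_neg, Matrix.neg_mul, sub_eq_add_neg]
  have hcongr : S * (fromCols E X * Φ * (fromCols E X)ᵀ) * Sᵀ =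
      (S * (E * Qh)) * (S * (E * Qh))ᵀ - (S * (X - E * -W) * R) * (S * (X - E * -W) * R)ᵀ := by
    rw [hsquare]
    simp only [Matrix.mul_sub, Matrix.sub_mul, transpose_mul, transpose_sub, Matrix.mul_assoc]
  rw [hcongr, posSemidef_mul_transpose_sub_iff_exists_contraction_s17]

/-- Parametrization of the system QMI: `S [E, 𝐗] Φ̂ [E, 𝐗]ᵀ Sᵀ ⪰ 0` iff
`S (𝐗 − Δ_c) R = S Q M₂` for some contraction `M₂`. -/
theorem system_qmi_parametrization (n m p T : ℕ)
    (Xp Xm : Matrix (Fin n) (Fin T) ℝ) (Um : Matrix (Fin m) (Fin T) ℝ)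
    (E : Matrix (Fin n ⊕ (Fin n ⊕ Fin m)) (Fin p) ℝ)
    (Φ : Matrix (Fin p ⊕ Fin T) (Fin p ⊕ Fin T) ℝ) (hΦ : Φ.IsSymm)
    -- Φ̂ ∈ Π_{p,T}:
    (Φ22d : Matrix (Fin T) (Fin T) ℝ)
    (hΦMP : IsMoorePenroseInv Φ.toBlocks₂₂ Φ22d)
    (hΦ22 : (-(Φ.toBlocks₂₂)).PosSemidef)
    (hΦker : ∀ x : Fin T → ℝ, Φ.toBlocks₂₂ *ᵥ x = 0 → Φ.toBlocks₁₂ *ᵥ x = 0)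
    (hΦSchur : (Φ.toBlocks₁₁ - Φ.toBlocks₁₂ * Φ22d * Φ.toBlocks₂₁).PosSemidef)
    (Qh : Matrix (Fin p) (Fin p) ℝ)
    (hQh : Qh * Qhᵀ = Φ.toBlocks₁₁ - Φ.toBlocks₁₂ * Φ22d * Φ.toBlocks₂₁)
    (R : Matrix (Fin T) (Fin T) ℝ)
    (hR : R * Rᵀ = -(Φ.toBlocks₂₂))
    (A : Matrix (Fin n) (Fin n) ℝ) (B : Matrix (Fin n) (Fin m) ℝ) :
    (rowS A B *
        (fromCols E (dataX Xp Xm Um) * Φ * (fromCols E (dataX Xp Xm Um))ᵀ) *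
        (rowS A B)ᵀ).PosSemidef ↔
    ∃ M₂ : Matrix (Fin p) (Fin T) ℝ,
      rowS A B * (dataX Xp Xm Um - E * (-(Φ.toBlocks₁₂ * Φ22d))) * R =
        rowS A B * (E * Qh) * M₂ ∧
      ((1 : Matrix (Fin p) (Fin p) ℝ) - M₂ * M₂ᵀ).PosSemidef :=
  system_qmi_parametrization_general n m p T Xp Xm Um E Φ hΦ Φ22d hΦMP hΦker Qh hQh R hR A B
end
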